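/- arXiv:1603.06944 — 10 statements merged into one kernel-verified Lean document; each statement's English description precedes it below -/
import Mathlib

section
/- Let X be a topological space and n ≥ 1. Every unitary evolution U on X with values in n×n complex unitary matrices that is gapped at 0 and π is homotopic, through unitary evolutions gapped at 0 and π, to a composition L*C, where L is a unitary loop and C is a constant evolution generated by a continuous Hermitian family H : X → Matrix n n ℂ all of whose eigenvalues lie in (-π,π)\{0} (i.e. C is gapped at zero). -/
open Matrix Set

/-- A unitary evolution on `X`: a continuous map `U : X × [0,1] → Matrix n n ℂ` with every
`U (x,t)` unitary and `U (x,0) = 1`. -/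
def IsUnitaryEvolution {X : Type*} [TopologicalSpace X] {n : ℕ}
    (U : X × unitInterval → Matrix (Fin n) (Fin n) ℂ) : Prop :=
  Continuous U ∧ (∀ p, U p ∈ Matrix.unitaryGroup (Fin n) ℂ) ∧ ∀ x, U (x, 0) = 1

/-- A unitary evolution gapped at 0 and π: neither 1 nor -1 is an eigenvalue of `U (x,1)`. -/
def IsGappedEvolution {X : Type*} [TopologicalSpace X] {n : ℕ}
    (U : X × unitInterval → Matrix (Fin n) (Fin n) ℂ) : Prop :=
  IsUnitaryEvolution U ∧
    ∀ x, (1 : ℂ) ∉ spectrum ℂ (U (x, 1)) ∧ (-1 : ℂ) ∉ spectrum ℂ (U (x, 1))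

/-- A unitary loop: a unitary evolution with `U (x,1) = 1` for all `x`. -/
def IsUnitaryLoop {X : Type*} [TopologicalSpace X] {n : ℕ}
    (U : X × unitInterval → Matrix (Fin n) (Fin n) ℂ) : Prop :=
  IsUnitaryEvolution U ∧ ∀ x, U (x, 1) = 1

/-- A continuous family of Hermitian matrices, all of whose eigenvalues are real and lie in
`(-π, π) \ {0}`. -/
def IsGappedHermitianFamily {X : Type*} [TopologicalSpace X] {n : ℕ}
    (H : X → Matrix (Fin n) (Fin n) ℂ) : Prop :=
  Continuous H ∧ ∀ x, (H x).IsHermitian ∧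
    ∀ z ∈ spectrum ℂ (H x), ∃ r : ℝ,
      z = (r : ℂ) ∧ r ∈ Set.Ioo (-Real.pi) Real.pi ∧ r ≠ 0

/-- The constant evolution generated by a static Hamiltonian family:
`C (x,t) = exp (-i t H x)`. -/
noncomputable def constEvol {X : Type*} [TopologicalSpace X] {n : ℕ}
    (H : X → Matrix (Fin n) (Fin n) ℂ) : X × unitInterval → Matrix (Fin n) (Fin n) ℂ :=
  fun p => NormedSpace.exp ((-(((p.2 : ℝ) : ℂ) * Complex.I)) • H p.1)

/-- A gapped constant evolution. -/
def IsGappedConstantEvolution {X : Type*} [TopologicalSpace X] {n : ℕ}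
    (U : X × unitInterval → Matrix (Fin n) (Fin n) ℂ) : Prop :=
  ∃ H : X → Matrix (Fin n) (Fin n) ℂ, IsGappedHermitianFamily H ∧ U = constEvol H

/-- Composition of unitary evolutions: run `U₁` at double speed on `[0,1/2]`, then `U₂`
(multiplied by the endpoint of `U₁`) on `[1/2,1]`. -/
noncomputable def compEvol {X : Type*} [TopologicalSpace X] {n : ℕ}
    (U₁ U₂ : X × unitInterval → Matrix (Fin n) (Fin n) ℂ) :
    X × unitInterval → Matrix (Fin n) (Fin n) ℂ :=
  fun p =>
    if (p.2 : ℝ) ≤ 1 / 2 then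
      U₁ (p.1, Set.projIcc 0 1 zero_le_one (2 * (p.2 : ℝ)))
    else
      U₂ (p.1, Set.projIcc 0 1 zero_le_one (2 * (p.2 : ℝ) - 1)) * U₁ (p.1, 1)

/-- Homotopy through maps satisfying the property `Q`. -/
def HomotopicThrough {Y α : Type*} [TopologicalSpace Y] [TopologicalSpace α]
    (Q : (Y → α) → Prop) (f g : Y → α) : Prop :=
  ∃ h : unitInterval × Y → α, Continuous h ∧ (∀ s, Q fun y => h (s, y)) ∧
    (∀ y, h (0, y) = f y) ∧ (∀ y, h (1, y) = g y)

/-!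
Write `A x = U (x, 1)`. As `-1` is not an eigenvalue of the unitary `A x`, the principal argument
is continuous on its spectrum, so `H x = -arg (A x)` (continuous functional calculus) is a
continuous Hermitian family with `exp (-i H) = A`, and it is gapped because `1` is not an
eigenvalue either. Then `L = U · exp (i t H)` is a loop. To deform `U` into `L * C`, first let `U`
run at double speed, then move the factor `exp (-i s t H)`, `s ∈ [0, 1]`, from the first half of
the composition to the second: at time `1` this only conjugates `U (x, 1)` by `exp (-i s H)`, so
the gap never closes.
-/

-- The L2 operator norm makes square complex matrices a C⋆-algebra; it induces the usual topology.
open scoped Matrix.Norms.L2Operator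
open Complex Unitary selfAdjoint

lemma Complex.arg_mem_Ioo_and_ne_zero_of_norm_eq_one {z : ℂ} (hz : ‖z‖ = 1) (h1 : z ≠ 1)
    (h2 : z ≠ -1) : z.arg ∈ Ioo (-Real.pi) Real.pi ∧ z.arg ≠ 0 := by
  have hz_eq : z = exp (z.arg * I) := by
    simpa [hz] using (norm_mul_exp_arg_mul_I z).symm
  refine ⟨⟨neg_pi_lt_arg z, (arg_le_pi z).lt_of_ne fun h => h2 ?_⟩, fun h => h1 ?_⟩
  · rw [hz_eq, h, exp_pi_mul_I]
  · rw [hz_eq, h, ofReal_zero, zero_mul, exp_zero]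

lemma Unitary.spectrum_argSelfAdjoint {A : Type*} [CStarAlgebra A] {u : unitary A}
    (hu : (-1 : ℂ) ∉ spectrum ℂ (u : A)) :
    spectrum ℂ (argSelfAdjoint u : A) = (fun z => (z.arg : ℂ)) '' spectrum ℂ (u : A) := by
  have hslit : spectrum ℂ (u : A) ⊆ slitPlane :=
    (spectrum_subset_slitPlane_iff_norm_lt_two u.2).mpr ((norm_sub_one_lt_two_iff u.2).mpr hu)
  exact cfc_map_spectrum _ _
    (hf := continuous_ofReal.comp_continuousOn (continuousOn_arg.mono hslit))

section Propagator

variable {X : Type*} {n : ℕ} {H : X → Matrix (Fin n) (Fin n) ℂ}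

noncomputable def propagator (H : X → Matrix (Fin n) (Fin n) ℂ) (r : ℝ) (x : X) :
    Matrix (Fin n) (Fin n) ℂ :=
  NormedSpace.exp ((-((r : ℂ) * I)) • H x)

lemma constEvol_apply [TopologicalSpace X] (p : X × unitInterval) :
    constEvol H p = propagator H p.2 p.1 :=
  rfl

@[simp]
lemma propagator_zero (x : X) : propagator H 0 x = 1 := by
  simp [propagator]

lemma propagator_add (r s : ℝ) (x : X) :
    propagator H (r + s) x = propagator H r x * propagator H s x := by
  rw [propagator, propagator, propagator, ← Matrix.exp_add_of_commute _ _
    ((Commute.refl (H x)).smul_left _ |>.smul_right _), ← add_smul]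
  congr 2
  push_cast
  ring

lemma propagator_mul_propagator_neg (r : ℝ) (x : X) :
    propagator H r x * propagator H (-r) x = 1 := by
  rw [← propagator_add, add_neg_cancel, propagator_zero]

lemma spectrum_propagator_mul_mul_propagator_neg (r : ℝ) (x : X)
    (M : Matrix (Fin n) (Fin n) ℂ) :
    spectrum ℂ (propagator H r x * M * propagator H (-r) x) = spectrum ℂ M :=
  spectrum.units_conjugate (u := ⟨_, _, propagator_mul_propagator_neg r x,
    by simpa using propagator_mul_propagator_neg (H := H) (-r) x⟩)

lemma propagator_mem_unitaryGroup {x : X} (hH : (H x).IsHermitian) (r : ℝ) :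
    propagator H r x ∈ Matrix.unitaryGroup (Fin n) ℂ := by
  let : NormedAlgebra ℚ (Matrix (Fin n) (Fin n) ℂ) := .restrictScalars ℚ ℂ _
  refine NormedSpace.exp_mem_unitary_of_mem_skewAdjoint ?_
  rw [skewAdjoint.mem_iff, star_smul, Matrix.star_eq_conjTranspose, hH.eq]
  simp

lemma continuous_propagator [TopologicalSpace X] (hH : Continuous H) :
    Continuous fun q : ℝ × X => propagator H q.1 q.2 := by
  let : NormedAlgebra ℚ (Matrix (Fin n) (Fin n) ℂ) := .restrictScalars ℚ ℂ _
  unfold propagator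
  fun_prop

theorem exists_isGappedHermitianFamily_propagator_one_eq [TopologicalSpace X]
    {A : X → Matrix (Fin n) (Fin n) ℂ} (hA : Continuous A)
    (hAu : ∀ x, A x ∈ Matrix.unitaryGroup (Fin n) ℂ)
    (h1 : ∀ x, (1 : ℂ) ∉ spectrum ℂ (A x)) (h2 : ∀ x, (-1 : ℂ) ∉ spectrum ℂ (A x)) :
    ∃ H : X → Matrix (Fin n) (Fin n) ℂ,
      IsGappedHermitianFamily H ∧ ∀ x, propagator H 1 x = A x := by
  let u (x : X) : unitary (Matrix (Fin n) (Fin n) ℂ) := ⟨A x, hAu x⟩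
  have hu (x : X) : ‖(u x - 1 : Matrix (Fin n) (Fin n) ℂ)‖ < 2 :=
    (norm_sub_one_lt_two_iff (hAu x)).mpr (h2 x)
  refine ⟨fun x => -(argSelfAdjoint (u x) : Matrix (Fin n) (Fin n) ℂ),
    ⟨?_, fun x => ⟨?_, ?_⟩⟩, fun x => ?_⟩
  · have : Continuous fun x => argSelfAdjoint (u x) :=
      continuousOn_argSelfAdjoint.comp_continuous (hA.subtype_mk _) fun x => by
        simpa [Subtype.dist_eq, dist_eq_norm] using hu x
    exact (continuous_subtype_val.comp this).neg
  · exact Matrix.isHermitian_iff_isSelfAdjoint.mpr (argSelfAdjoint (u x)).2.neg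
  · intro z hz
    rw [← spectrum.neg_eq, Set.mem_neg, spectrum_argSelfAdjoint (h2 x)] at hz
    obtain ⟨w, hw, hwz : (w.arg : ℂ) = -z⟩ := hz
    obtain ⟨⟨hlo, hhi⟩, hne⟩ := arg_mem_Ioo_and_ne_zero_of_norm_eq_one
      (spectrum.norm_eq_one_of_unitary (hAu x) hw) (fun h => h1 x (h ▸ hw))
      (fun h => h2 x (h ▸ hw))
    refine ⟨-w.arg, ?_, ⟨by linarith, by linarith⟩, neg_ne_zero.mpr hne⟩
    rw [ofReal_neg, hwz, neg_neg]
  · have hexp := congrArg Subtype.val (expUnitary_argSelfAdjoint (hu x))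
    rw [expUnitary_coe] at hexp
    rw [propagator, show A x = u x from rfl, ← hexp]
    congr 1
    simp

end Propagator

lemma HomotopicThrough.trans {Y α : Type*} [TopologicalSpace Y] [TopologicalSpace α]
    {Q : (Y → α) → Prop} {f g k : Y → α} (hfg : HomotopicThrough Q f g)
    (hgk : HomotopicThrough Q g k) : HomotopicThrough Q f k := by
  obtain ⟨h₁, hc₁, hQ₁, h₁0, h₁1⟩ := hfg
  obtain ⟨h₂, hc₂, hQ₂, h₂0, h₂1⟩ := hgk
  refine ⟨fun q => if (q.1 : ℝ) ≤ 1 / 2 then h₁ (projIcc 0 1 zero_le_one (2 * q.1), q.2)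
    else h₂ (projIcc 0 1 zero_le_one (2 * q.1 - 1), q.2), ?_, fun s => ?_, fun y => ?_,
    fun y => ?_⟩
  · refine Continuous.if_le (by fun_prop) (by fun_prop) (by fun_prop) continuous_const ?_
    intro q hq
    rw [hq]
    norm_num [h₁1, h₂0]
  · by_cases hs : (s : ℝ) ≤ 1 / 2
    · simpa only [hs, if_true] using hQ₁ _
    · simpa only [hs, if_false] using hQ₂ _
  · norm_num [h₁0]
  · norm_num [h₂1]

section Evolution

variable {X : Type*} [TopologicalSpace X] {n : ℕ}
  {U V L C : X × unitInterval → Matrix (Fin n) (Fin n) ℂ}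
  {H : X → Matrix (Fin n) (Fin n) ℂ}

lemma IsUnitaryEvolution.mul (hU : IsUnitaryEvolution U) (hV : IsUnitaryEvolution V) :
    IsUnitaryEvolution (U * V) :=
  ⟨hU.1.mul hV.1, fun p => mul_mem (hU.2.1 p) (hV.2.1 p), fun x => by
    simp [hU.2.2 x, hV.2.2 x]⟩

lemma isUnitaryEvolution_propagator (hH : Continuous H) (hHerm : ∀ x, (H x).IsHermitian)
    {f : unitInterval → ℝ} (hf : Continuous f) (hf0 : f 0 = 0) :
    IsUnitaryEvolution fun p : X × unitInterval => propagator H (f p.2) p.1 :=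
  ⟨(continuous_propagator hH).comp ((hf.comp continuous_snd).prodMk continuous_fst),
    fun p => propagator_mem_unitaryGroup (hHerm _) _,
    fun x => by simp only [hf0, propagator_zero]⟩

lemma isUnitaryLoop_mul_propagator (hU : IsUnitaryEvolution U) (hH : Continuous H)
    (hHerm : ∀ x, (H x).IsHermitian) (hH1 : ∀ x, propagator H 1 x = U (x, 1)) :
    IsUnitaryLoop (U * fun p => propagator H (-p.2) p.1) :=
  ⟨hU.mul (isUnitaryEvolution_propagator (f := fun t => -(t : ℝ)) hH hHerm (by fun_prop)
    (by simp)), fun x => by simp [← hH1, ← propagator_add]⟩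

lemma compEvol_apply_zero (x : X) : compEvol L C (x, 0) = L (x, 0) := by
  norm_num [compEvol]

lemma compEvol_apply_one (x : X) : compEvol L C (x, 1) = C (x, 1) * L (x, 1) := by
  norm_num [compEvol]

lemma continuous_compEvol (hL : Continuous L) (hC : Continuous C) (hC0 : ∀ x, C (x, 0) = 1) :
    Continuous (compEvol L C) := by
  refine Continuous.if_le (by fun_prop) (by fun_prop) (by fun_prop) continuous_const ?_
  intro p hp
  rw [hp]
  norm_num [hC0]

lemma IsUnitaryEvolution.compEvol (hL : IsUnitaryEvolution L) (hC : IsUnitaryEvolution C) :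
    IsUnitaryEvolution (compEvol L C) := by
  refine ⟨continuous_compEvol hL.1 hC.1 hC.2.2, fun p => ?_, fun x => ?_⟩
  · unfold _root_.compEvol
    split_ifs
    exacts [hL.2.1 _, mul_mem (hC.2.1 _) (hL.2.1 _)]
  · rw [compEvol_apply_zero, hL.2.2]

lemma IsGappedEvolution.homotopicThrough_compEvol_one (hU : IsGappedEvolution U) :
    HomotopicThrough IsGappedEvolution U (compEvol U 1) := by
  obtain ⟨⟨hUc, hUu, hU0⟩, hgap⟩ := hU
  refine ⟨fun q => U (q.2.1, projIcc 0 1 zero_le_one ((1 + q.1) * q.2.2)), by fun_prop,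
    fun s => ⟨⟨by fun_prop, fun p => hUu _, fun x => by simpa using hU0 x⟩, fun x => ?_⟩,
    fun p => by simp, fun p => ?_⟩
  · dsimp only
    rw [Set.Icc.coe_one, mul_one, projIcc_of_right_le _ (by linarith [s.2.1])]
    exact hgap x
  · unfold compEvol
    dsimp only
    rw [Set.Icc.coe_one, one_add_one_eq_two]
    split_ifs with h
    · rfl
    · rw [Pi.one_apply, one_mul, projIcc_of_right_le _ (by linarith [not_le.mp h])]
      rfl

lemma IsGappedEvolution.homotopicThrough_compEvol_propagator (hU : IsGappedEvolution U)
    (hH : Continuous H) (hHerm : ∀ x, (H x).IsHermitian) :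
    HomotopicThrough IsGappedEvolution (compEvol U 1)
      (compEvol (U * fun p => propagator H (-p.2) p.1) (constEvol H)) := by
  obtain ⟨hUe, hgap⟩ := hU
  let L (s : unitInterval) : X × unitInterval → Matrix (Fin n) (Fin n) ℂ :=
    U * fun p => propagator H (-(s * p.2)) p.1
  let C (s : unitInterval) (p : X × unitInterval) : Matrix (Fin n) (Fin n) ℂ :=
    propagator H (s * p.2) p.1
  have hL (s : unitInterval) : IsUnitaryEvolution (L s) :=
    hUe.mul (isUnitaryEvolution_propagator (f := fun t => -(s * t)) hH hHerm (by fun_prop)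
      (by simp))
  have hC (s : unitInterval) : IsUnitaryEvolution (C s) :=
    isUnitaryEvolution_propagator (f := fun t => s * t) hH hHerm (by fun_prop) (by simp)
  refine ⟨fun q => compEvol (L q.1) (C q.1) q.2, ?_,
    fun s => ⟨(hL s).compEvol (hC s), fun x => ?_⟩, fun p => ?_, fun p => ?_⟩
  · have hprop {f : (unitInterval × X) × unitInterval → ℝ} (hf : Continuous f) :
        Continuous fun q => propagator H (f q) q.1.2 :=
      (continuous_propagator hH).comp (hf.prodMk (by fun_prop))
    have hcomp := continuous_compEvol (X := unitInterval × X)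
      (L := fun q => U (q.1.2, q.2) * propagator H (-(q.1.1 * q.2)) q.1.2)
      (C := fun q => propagator H (q.1.1 * q.2) q.1.2)
      ((hUe.1.comp (by fun_prop)).mul (hprop (by fun_prop))) (hprop (by fun_prop))
      (fun q => by simp)
    exact hcomp.comp (f := fun q : unitInterval × (X × unitInterval) => ((q.1, q.2.1), q.2.2))
      (by fun_prop)
  · dsimp only
    rw [compEvol_apply_one]
    simp only [L, C, Pi.mul_apply, Set.Icc.coe_one, mul_one, ← mul_assoc,
      spectrum_propagator_mul_mul_propagator_neg]
    exact hgap x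
  · dsimp only
    congr 1 <;> ext1 q <;> simp [L, C]
  · dsimp only
    congr 1 <;> ext1 q <;> simp [L, C, constEvol_apply]

end Evolution

theorem gapped_evolution_homotopic_loop_comp_const_general
    {X : Type*} [TopologicalSpace X] {n : ℕ}
    (U : X × unitInterval → Matrix (Fin n) (Fin n) ℂ) (hU : IsGappedEvolution U) :
    ∃ L C : X × unitInterval → Matrix (Fin n) (Fin n) ℂ,
      IsUnitaryLoop L ∧ IsGappedConstantEvolution C ∧
      HomotopicThrough IsGappedEvolution U (compEvol L C) := by
  obtain ⟨H, hH, hH1⟩ := exists_isGappedHermitianFamily_propagator_one_eq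
    (A := fun x => U (x, 1)) (hU.1.1.comp (by fun_prop)) (fun x => hU.1.2.1 _)
    (fun x => (hU.2 x).1) (fun x => (hU.2 x).2)
  have hHerm (x : X) : (H x).IsHermitian := (hH.2 x).1
  exact ⟨_, _, isUnitaryLoop_mul_propagator hU.1 hH.1 hHerm hH1, ⟨H, hH, rfl⟩,
    hU.homotopicThrough_compEvol_one.trans (hU.homotopicThrough_compEvol_propagator hH.1 hHerm)⟩

/-- every unitary evolution gapped at 0 and π is homotopic, through gapped
unitary evolutions, to the composition of a unitary loop with a gapped constant evolution. -/
theorem gapped_evolution_homotopic_loop_comp_const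
    {X : Type*} [TopologicalSpace X] {n : ℕ} (hn : 1 ≤ n)
    (U : X × unitInterval → Matrix (Fin n) (Fin n) ℂ) (hU : IsGappedEvolution U) :
    ∃ L C : X × unitInterval → Matrix (Fin n) (Fin n) ℂ,
      IsUnitaryLoop L ∧ IsGappedConstantEvolution C ∧
      HomotopicThrough IsGappedEvolution U (compEvol L C) :=
  gapped_evolution_homotopic_loop_comp_const_general U hU
end

section
/- The Floquet-Hamiltonian map is continuous: on the set S of n×n complex unitary matrices V for which -1 is not an eigenvalue, the map sending V to the unique Hermitian matrix H with all eigenvalues in the open interval (-π,π) satisfying exp(-i·H) = V is a continuous function from S (with the subspace topology of Matrix n n ℂ) to Matrix n n ℂ. -/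
/-!
Write `arg` for the continuous functional calculus of `z ↦ arg z` on normal elements. If `H` is
self-adjoint with spectrum in `(-π, π)`, then `arg ∘ (z ↦ exp (-i z)) = -id` on the spectrum of
`H`, so `H = -arg (exp (-i H))`; hence `F V = -arg V` on the set in question. The spectrum of a
unitary avoiding `-1` lies in the slit plane, where `arg` is continuous, and the functional
calculus is continuous in its argument as long as the function is continuous on a common
neighbourhood of the spectra.
-/

open Complex Set
open scoped Real

lemma Complex.arg_exp_neg_mul_I {r : ℝ} (hr : r ∈ Ioo (-π) π) :
    arg (exp (-(r * I))) = -r := by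
  rw [← neg_mul, ← ofReal_neg, arg_exp_mul_I, toIocMod_eq_self]
  constructor <;> linarith [hr.1, hr.2]

lemma Complex.exp_neg_mul_I_mem_slitPlane {r : ℝ} (hr : r ∈ Ioo (-π) π) :
    exp (-(r * I)) ∈ slitPlane :=
  mem_slitPlane_iff_arg.mpr ⟨by rw [arg_exp_neg_mul_I hr]; linarith [hr.1], exp_ne_zero _⟩

section CStarAlgebra

variable {A : Type*} [CStarAlgebra A]

lemma exp_neg_I_smul_eq_cfc {a : A} (ha : IsStarNormal a) :
    NormedSpace.exp ((-I) • a) = cfc (fun z : ℂ => exp (-(z * I))) a := by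
  rw [← CFC.complex_exp_eq_normedSpace_exp, ← cfc_comp_smul (-I) exp a]
  simp only [smul_eq_mul, neg_mul, mul_comm I]

lemma cfc_arg_exp_neg_I_smul {a : A} (ha : IsStarNormal a)
    (hspec : ∀ z ∈ spectrum ℂ a, ∃ r : ℝ, z = r ∧ r ∈ Ioo (-π) π) :
    cfc (fun z : ℂ => (arg z : ℂ)) (NormedSpace.exp ((-I) • a)) = -a := by
  rw [exp_neg_I_smul_eq_cfc ha, ← cfc_comp' (hg := ?hg), ← cfc_neg_id (R := ℂ) a]
  · refine cfc_congr fun z hz => ?_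
    obtain ⟨r, rfl, hr⟩ := hspec z hz
    simp [arg_exp_neg_mul_I hr]
  case hg =>
    rintro - ⟨z, hz, rfl⟩
    obtain ⟨r, rfl, hr⟩ := hspec z hz
    exact continuous_ofReal.continuousAt.comp_continuousWithinAt
      (continuousAt_arg (exp_neg_mul_I_mem_slitPlane hr)).continuousWithinAt

lemma continuousOn_cfc_arg :
    ContinuousOn (cfc (fun z : ℂ => (arg z : ℂ)))
      {u : A | u ∈ unitary A ∧ (-1 : ℂ) ∉ spectrum ℂ u} := by
  refine ContinuousOn.cfc_of_mem_nhdsSet _ (s := slitPlane) ?_ continuousOn_id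
    (fun _ hu => isStarNormal_of_mem_unitary hu.1) ?_
  · refine isOpen_slitPlane.mem_nhdsSet.mpr (iUnion₂_subset fun u hu => ?_)
    exact (Unitary.spectrum_subset_slitPlane_iff_norm_lt_two hu.1).mpr
      ((Unitary.norm_sub_one_lt_two_iff hu.1).mpr hu.2)
  · exact continuous_ofReal.comp_continuousOn continuousOn_arg

end CStarAlgebra

theorem floquet_hamiltonian_continuous_general {n : ℕ}
    (F : Matrix (Fin n) (Fin n) ℂ → Matrix (Fin n) (Fin n) ℂ)
    (hF : ∀ V ∈ {V : Matrix (Fin n) (Fin n) ℂ |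
        V ∈ Matrix.unitaryGroup (Fin n) ℂ ∧ (-1 : ℂ) ∉ spectrum ℂ V},
      (F V).IsHermitian ∧
      (∀ z ∈ spectrum ℂ (F V), ∃ r : ℝ, z = (r : ℂ) ∧ r ∈ Set.Ioo (-Real.pi) Real.pi) ∧
      NormedSpace.exp ((-Complex.I) • F V) = V) :
    ContinuousOn F {V : Matrix (Fin n) (Fin n) ℂ |
      V ∈ Matrix.unitaryGroup (Fin n) ℂ ∧ (-1 : ℂ) ∉ spectrum ℂ V} := by
  -- The operator-norm C⋆-structure on matrices induces the usual topology.
  open scoped Matrix.Norms.L2Operator in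
  refine continuousOn_cfc_arg.neg.congr fun V hV => ?_
  obtain ⟨hHerm, hspec, hexp⟩ := hF V hV
  have harg := cfc_arg_exp_neg_I_smul (IsSelfAdjoint.isStarNormal hHerm) hspec
  rw [hexp] at harg
  rw [Pi.neg_apply, harg, neg_neg]

/-- the Floquet-Hamiltonian map is continuous on the set of unitaries for
which `-1` is not an eigenvalue: any map `F` assigning to each such unitary `V` the (unique)
Hermitian matrix with eigenvalues in `(-π,π)` and `exp (-i F V) = V` is continuous there. -/
theorem floquet_hamiltonian_continuous {n : ℕ} (hn : 1 ≤ n)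
    (F : Matrix (Fin n) (Fin n) ℂ → Matrix (Fin n) (Fin n) ℂ)
    (hF : ∀ V ∈ {V : Matrix (Fin n) (Fin n) ℂ |
        V ∈ Matrix.unitaryGroup (Fin n) ℂ ∧ (-1 : ℂ) ∉ spectrum ℂ V},
      (F V).IsHermitian ∧
      (∀ z ∈ spectrum ℂ (F V), ∃ r : ℝ, z = (r : ℂ) ∧ r ∈ Set.Ioo (-Real.pi) Real.pi) ∧
      NormedSpace.exp ((-Complex.I) • F V) = V) :
    ContinuousOn F {V : Matrix (Fin n) (Fin n) ℂ |
      V ∈ Matrix.unitaryGroup (Fin n) ℂ ∧ (-1 : ℂ) ∉ spectrum ℂ V} :=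
  floquet_hamiltonian_continuous_general F hF
end

section
/- Let X be a topological space and let H₁, H₂ : X → Matrix n n ℂ be continuous maps such that each H_i(x) is Hermitian with all eigenvalues in (-π,π)\{0}, and let C_i(x,t) = exp(-i t H_i(x)) be the corresponding gapped constant evolutions. Then C₁ and C₂ are homotopic through gapped constant evolutions if and only if H₁ and H₂ are homotopic through continuous families of Hermitian matrices with all eigenvalues in (-π,π)\{0}, i.e. iff there is a continuous map G : [0,1] × X → Matrix n n ℂ with each G(s,x) Hermitian with all eigenvalues in (-π,π)\{0}, G(0,·) = H₁ and G(1,·) = H₂. -/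
open Matrix Set

/-! The generator of a constant evolution is its derivative at `t = 0`, so `A ↦ (t ↦ exp (-i t A))`
is injective; restricted to the compact set of matrices of norm at most `π` it is therefore a
closed embedding into `C([0,1], Mₙ(ℂ))`. For Hermitian matrices the (C*-)norm is the spectral
radius, so gapped generators lie in that set, and the generators of a homotopy of gapped constant
evolutions depend continuously on all parameters. Conversely, exponentiating a homotopy of gapped
Hamiltonians gives a homotopy of gapped constant evolutions. -/

open NormedSpace

section ExpEvol

variable {𝔸 : Type*} [NormedRing 𝔸] [NormedAlgebra ℂ 𝔸] [CompleteSpace 𝔸]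

theorem eq_of_eqOn_exp_ofReal_smul {A B : 𝔸}
    (h : EqOn (fun u : ℝ => exp ((u : ℂ) • A)) (fun u : ℝ => exp ((u : ℂ) • B)) (Icc 0 1)) :
    A = B := by
  have hasDeriv (C : 𝔸) : HasDerivWithinAt (fun u : ℝ => exp ((u : ℂ) • C)) C (Icc 0 1) 0 := by
    have := (hasDerivAt_exp_smul_const (𝕂 := ℂ) C ((0 : ℝ) : ℂ)).scomp (0 : ℝ)
      Complex.ofRealCLM.hasDerivAt
    simp only [Complex.ofReal_zero, zero_smul, exp_zero, one_mul, Complex.ofRealCLM_apply,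
      Complex.ofReal_one, one_smul] at this
    exact this.hasDerivWithinAt
  have h0 : (0 : ℝ) ∈ Icc (0 : ℝ) 1 := left_mem_Icc.2 zero_le_one
  exact (uniqueDiffOn_Icc zero_lt_one 0 h0).eq_deriv _ (hasDeriv A)
    ((hasDeriv B).congr (fun u hu => h hu) (h h0))

noncomputable def expEvol : C(𝔸, C(unitInterval, 𝔸)) :=
  -- `exp` does not depend on the `ℚ`-algebra structure; this one is only needed for continuity.
  letI := NormedAlgebra.restrictScalars ℚ ℂ 𝔸
  ContinuousMap.curry ⟨fun p => exp ((-(((p.2 : ℝ) : ℂ) * Complex.I)) • p.1), by fun_prop⟩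

theorem expEvol_apply (A : 𝔸) (t : unitInterval) :
    expEvol A t = exp ((-(((t : ℝ) : ℂ) * Complex.I)) • A) := rfl

theorem expEvol_injective : Function.Injective (expEvol : 𝔸 → C(unitInterval, 𝔸)) := by
  intro A B hAB
  have hsmul (u : ℝ) (C : 𝔸) : (u : ℂ) • (-Complex.I) • C = (-((u : ℂ) * Complex.I)) • C := by
    rw [smul_smul, mul_neg]
  have : (-Complex.I) • A = (-Complex.I) • B :=
    eq_of_eqOn_exp_ofReal_smul fun u hu => by
      simpa only [hsmul, expEvol_apply] using DFunLike.congr_fun hAB ⟨u, hu⟩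
  exact smul_right_injective 𝔸 (neg_ne_zero.2 Complex.I_ne_zero) this

theorem continuous_of_continuous_expEvol {Y : Type*} [TopologicalSpace Y] {K : Set 𝔸}
    (hK : IsCompact K) {F : Y → 𝔸} (hFK : ∀ y, F y ∈ K)
    (hF : Continuous fun p : Y × unitInterval => expEvol (F p.1) p.2) : Continuous F := by
  have : CompactSpace K := isCompact_iff_compactSpace.1 hK
  have hemb : Topology.IsEmbedding (K.domRestrict expEvol) :=
    ((expEvol.continuous.comp continuous_subtype_val).isClosedEmbedding
      (expEvol_injective.injOn.injective)).isEmbedding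
  have hcurry : Continuous fun y => K.domRestrict expEvol ⟨F y, hFK y⟩ :=
    ContinuousMap.continuous_of_continuous_uncurry _ hF
  exact continuous_subtype_val.comp (hemb.continuous_iff.2 hcurry)

end ExpEvol

theorem IsSelfAdjoint.norm_le_of_forall_mem_spectrum {A : Type*} [CStarAlgebra A] {a : A}
    (ha : IsSelfAdjoint a) {r : ℝ} (hr : 0 ≤ r) (h : ∀ z ∈ spectrum ℂ a, ‖z‖ ≤ r) : ‖a‖ ≤ r := by
  lift r to NNReal using hr
  suffices ‖a‖₊ ≤ r from mod_cast this
  rw [← ENNReal.coe_le_coe, ← ha.spectralRadius_eq_nnnorm]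
  exact iSup₂_le fun z hz => ENNReal.coe_le_coe.2 (h z hz)

section ConstEvol

-- With the `L²` operator norm, matrices form a C*-algebra.
open scoped Matrix.Norms.L2Operator

variable {n : ℕ} {X : Type*} [TopologicalSpace X]

theorem Continuous.constEvol {H : X → Matrix (Fin n) (Fin n) ℂ} (hH : Continuous H) :
    Continuous (constEvol H) :=
  show Continuous fun p : X × unitInterval => expEvol (H p.1) p.2 by fun_prop

theorem constEvol_injective :
    Function.Injective (constEvol : (X → Matrix (Fin n) (Fin n) ℂ) → _) :=
  fun _ _ h => funext fun x => expEvol_injective (ContinuousMap.ext fun t => congrFun h (x, t))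

theorem continuous_of_continuous_constEvol {H : X → Matrix (Fin n) (Fin n) ℂ} {r : ℝ} (hr : 0 ≤ r)
    (hH : ∀ x, (H x).IsHermitian ∧ ∀ z ∈ spectrum ℂ (H x), ‖z‖ ≤ r)
    (hcont : Continuous (constEvol H)) : Continuous H :=
  continuous_of_continuous_expEvol (isCompact_closedBall 0 r)
    (fun x => mem_closedBall_zero_iff.2 ((hH x).1.isSelfAdjoint.norm_le_of_forall_mem_spectrum hr
      (hH x).2)) hcont

end ConstEvol

theorem const_evolutions_homotopic_iff_hamiltonians_homotopic_general
    {X : Type*} [TopologicalSpace X] {n : ℕ}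
    (H₁ H₂ : X → Matrix (Fin n) (Fin n) ℂ) :
    HomotopicThrough IsGappedConstantEvolution (constEvol H₁) (constEvol H₂) ↔
      ∃ G : unitInterval × X → Matrix (Fin n) (Fin n) ℂ,
        Continuous G ∧
        (∀ p, (G p).IsHermitian ∧
          ∀ z ∈ spectrum ℂ (G p), ∃ r : ℝ,
            z = (r : ℂ) ∧ r ∈ Set.Ioo (-Real.pi) Real.pi ∧ r ≠ 0) ∧
        (∀ x, G (0, x) = H₁ x) ∧ (∀ x, G (1, x) = H₂ x) := by
  constructor
  · rintro ⟨h, hcont, hgapped, h0, h1⟩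
    choose H hH hHh using hgapped
    have hbound (p : unitInterval × X) : (H p.1 p.2).IsHermitian ∧
        ∀ z ∈ spectrum ℂ (H p.1 p.2), ‖z‖ ≤ Real.pi := by
      refine ⟨((hH p.1).2 p.2).1, fun z hz => ?_⟩
      obtain ⟨r, rfl, hr, -⟩ := ((hH p.1).2 p.2).2 z hz
      exact (Complex.norm_real r).trans_le (abs_le.2 ⟨hr.1.le, hr.2.le⟩)
    have hGh : constEvol (fun p : unitInterval × X => H p.1 p.2) =
        fun q => h (q.1.1, (q.1.2, q.2)) :=
      funext fun q => (congrFun (hHh q.1.1) (q.1.2, q.2)).symm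
    refine ⟨fun p => H p.1 p.2, continuous_of_continuous_constEvol Real.pi_pos.le hbound ?_,
      fun p => (hH p.1).2 p.2, fun x => ?_, fun x => ?_⟩
    · rw [hGh]
      fun_prop
    · exact congrFun (constEvol_injective ((hHh 0).symm.trans (funext h0))) x
    · exact congrFun (constEvol_injective ((hHh 1).symm.trans (funext h1))) x
  · rintro ⟨G, hGc, hGgapped, hG0, hG1⟩
    refine ⟨fun q => constEvol G ((q.1, q.2.1), q.2.2), hGc.constEvol.comp (by fun_prop),
      fun s => ⟨fun x => G (s, x), ⟨by fun_prop, fun x => hGgapped (s, x)⟩, rfl⟩,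
      fun y => ?_, fun y => ?_⟩
    · simp only [constEvol, hG0]
    · simp only [constEvol, hG1]

/-- two gapped constant evolutions are homotopic through gapped constant
evolutions iff their generating Hermitian families are homotopic through continuous families
of Hermitian matrices with all eigenvalues in `(-π,π) \ {0}`. -/
theorem const_evolutions_homotopic_iff_hamiltonians_homotopic
    {X : Type*} [TopologicalSpace X] {n : ℕ} (hn : 1 ≤ n)
    (H₁ H₂ : X → Matrix (Fin n) (Fin n) ℂ)
    (hH₁ : IsGappedHermitianFamily H₁) (hH₂ : IsGappedHermitianFamily H₂) :
    HomotopicThrough IsGappedConstantEvolution (constEvol H₁) (constEvol H₂) ↔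
      ∃ G : unitInterval × X → Matrix (Fin n) (Fin n) ℂ,
        Continuous G ∧
        (∀ p, (G p).IsHermitian ∧
          ∀ z ∈ spectrum ℂ (G p), ∃ r : ℝ,
            z = (r : ℂ) ∧ r ∈ Set.Ioo (-Real.pi) Real.pi ∧ r ≠ 0) ∧
        (∀ x, G (0, x) = H₁ x) ∧ (∀ x, G (1, x) = H₂ x) :=
  const_evolutions_homotopic_iff_hamiltonians_homotopic_general H₁ H₂
end

section
/- Particle-hole symmetry of the Hamiltonian implies particle-hole symmetry of the evolution operator: let d, n ≥ 1, let H : (Fin d → ℝ) → ℝ → Matrix n n ℂ be continuous with each H(k,t) Hermitian, and let P be an n×n unitary matrix such that P·H(k,t)·P⁻¹ = -(H(-k,t))* for all k and t, where M* denotes the entrywise complex conjugate. Suppose U : (Fin d → ℝ) → ℝ → Matrix n n ℂ satisfies U(k,0) = 1 and, for every k and t, the derivative in t of U(k,·) at t equals -i·H(k,t)·U(k,t). Then P·U(k,t)·P⁻¹ = (U(-k,t))* for all k and t. -/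
/-!
Both `t ↦ P U(k,t) P⁻¹` and `t ↦ U(-k,t)*` solve `X' = i A(t) X` with `A(t) = H(-k,t)*`, which
is Hermitian, and both equal `1` at `t = 0`. For a skew-Hermitian generator `K` the difference `D` of
two solutions has `(Dᴴ D)' = Dᴴ (Kᴴ + K) D = 0`, so `Dᴴ D` stays `0` and hence `D = 0`.
-/

open Matrix

attribute [local instance] Matrix.normedAddCommGroup Matrix.normedSpace

section Calculus

variable {𝕜 R : Type*} [NontriviallyNormedField 𝕜] [NormedRing R] [NormedAlgebra 𝕜 R]

theorem Matrix.hasDerivAt_iff {m p : Type*} [Fintype p] {A : 𝕜 → Matrix m p R}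
    {A' : Matrix m p R} {x : 𝕜} :
    HasDerivAt A A' x ↔ ∀ i j, HasDerivAt (fun y => A y i j) (A' i j) x :=
  hasDerivAt_pi.trans (forall_congr' fun _ => hasDerivAt_pi)

theorem HasDerivAt.matrix_mul {l m p : Type*} [Fintype m] [Fintype p] {A : 𝕜 → Matrix l m R}
    {B : 𝕜 → Matrix m p R} {A' : Matrix l m R} {B' : Matrix m p R} {x : 𝕜}
    (hA : HasDerivAt A A' x) (hB : HasDerivAt B B' x) :
    HasDerivAt (fun y => A y * B y) (A' * B x + A x * B') x := by
  rw [Matrix.hasDerivAt_iff] at hA hB ⊢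
  intro i j
  simp only [Matrix.add_apply, mul_apply, ← Finset.sum_add_distrib]
  exact HasDerivAt.fun_sum fun k _ => (hA i k).fun_mul (hB k j)

theorem HasDerivAt.matrix_mul_mul_of_linear {n : Type*} [Fintype n] [DecidableEq n]
    {P Q K : Matrix n n R} {U : 𝕜 → Matrix n n R} {x : 𝕜} (hQP : Q * P = 1)
    (hU : HasDerivAt U (K * U x) x) :
    HasDerivAt (fun y => P * U y * Q) (P * K * Q * (P * U x * Q)) x := by
  refine (((hasDerivAt_const x P).matrix_mul hU).matrix_mul (hasDerivAt_const x Q)).congr_deriv ?_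
  simp only [zero_mul, zero_add, mul_zero, add_zero, Matrix.mul_assoc, ← Matrix.mul_assoc Q P,
    hQP, Matrix.one_mul]

end Calculus

section SkewHermitianFlow

variable {𝕜 : Type*} [RCLike 𝕜] {n : Type*} [Fintype n]

theorem HasDerivAt.matrix_map_conj {m : Type*} {X : ℝ → Matrix m n 𝕜} {X' : Matrix m n 𝕜}
    {t : ℝ} (hX : HasDerivAt X X' t) :
    HasDerivAt (fun s => (X s).map (starRingEnd 𝕜)) (X'.map (starRingEnd 𝕜)) t := by
  rw [Matrix.hasDerivAt_iff] at hX ⊢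
  exact fun i j => (hX i j).star

-- The star-ordering of `𝕜` gives `Dᴴ * D = 0 → D = 0` (`conjTranspose_mul_self_eq_zero`).
open scoped ComplexOrder

variable {K : ℝ → Matrix n n 𝕜}

theorem hasDerivAt_conjTranspose_mul_self_of_skew (hK : ∀ t, (K t)ᴴ = -K t)
    {D : ℝ → Matrix n n 𝕜} (hD : ∀ t, HasDerivAt D (K t * D t) t) (t : ℝ) :
    HasDerivAt (fun s => (D s)ᴴ * D s) 0 t := by
  refine ((hD t).star.matrix_mul (hD t)).congr_deriv ?_
  rw [star_mul, star_eq_conjTranspose (K t), hK, Matrix.mul_neg, neg_mul, Matrix.mul_assoc,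
    neg_add_cancel]

theorem eq_zero_of_hasDerivAt_of_skew (hK : ∀ t, (K t)ᴴ = -K t)
    {D : ℝ → Matrix n n 𝕜} (hD : ∀ t, HasDerivAt D (K t * D t) t) {s : ℝ} (hs : D s = 0)
    (t : ℝ) : D t = 0 := by
  have hderiv := hasDerivAt_conjTranspose_mul_self_of_skew hK hD
  have hconst := is_const_of_deriv_eq_zero (fun t => (hderiv t).differentiableAt)
    (fun t => (hderiv t).deriv) t s
  rw [← conjTranspose_mul_self_eq_zero]
  simpa [hs] using hconst

theorem eq_of_hasDerivAt_of_skew (hK : ∀ t, (K t)ᴴ = -K t)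
    {X Y : ℝ → Matrix n n 𝕜} (hX : ∀ t, HasDerivAt X (K t * X t) t)
    (hY : ∀ t, HasDerivAt Y (K t * Y t) t) {s : ℝ} (hs : X s = Y s) (t : ℝ) : X t = Y t :=
  sub_eq_zero.1 <| eq_zero_of_hasDerivAt_of_skew hK (D := X - Y)
    (fun t => ((hX t).sub (hY t)).congr_deriv (Matrix.mul_sub _ _ _).symm) (sub_eq_zero.2 hs) t

end SkewHermitianFlow

theorem evolution_particle_hole_symmetry_general {d n : ℕ}
    (H : (Fin d → ℝ) → ℝ → Matrix (Fin n) (Fin n) ℂ)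
    (hHherm : ∀ k t, (H k t).IsHermitian)
    (P : Matrix (Fin n) (Fin n) ℂ) (hP : P ∈ Matrix.unitaryGroup (Fin n) ℂ)
    (hPH : ∀ k t, P * H k t * P⁻¹ = -((H (-k) t).map (starRingEnd ℂ)))
    (U : (Fin d → ℝ) → ℝ → Matrix (Fin n) (Fin n) ℂ)
    (hU0 : ∀ k, U k 0 = 1)
    (hUde : ∀ k t, HasDerivAt (U k) ((-Complex.I) • (H k t * U k t)) t) :
    ∀ k t, P * U k t * P⁻¹ = (U (-k) t).map (starRingEnd ℂ) := by
  intro k t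
  have hPP : P⁻¹ * P = 1 := by rw [Matrix.inv_eq_left_inv hP.1]; exact hP.1
  have hskew : ∀ s, (Complex.I • (H (-k) s).map (starRingEnd ℂ))ᴴ =
      -(Complex.I • (H (-k) s).map (starRingEnd ℂ)) := fun s => by
    rw [conjTranspose_smul, ((hHherm (-k) s).map (starRingEnd ℂ) fun _ => rfl).eq,
      Complex.star_def, Complex.conj_I, neg_smul]
  refine eq_of_hasDerivAt_of_skew (X := fun s => P * U k s * P⁻¹)
    (Y := fun s => (U (-k) s).map (starRingEnd ℂ)) hskew (fun s => ?_) (fun s => ?_) (s := 0) ?_ t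
  · refine (HasDerivAt.matrix_mul_mul_of_linear hPP
      ((hUde k s).congr_deriv (smul_mul_assoc _ _ _).symm)).congr_deriv ?_
    rw [Matrix.mul_smul, Matrix.smul_mul, hPH, smul_neg, neg_smul, neg_neg]
  · refine (hUde (-k) s).matrix_map_conj.congr_deriv ?_
    rw [Matrix.map_smul' _ _ _ (map_mul _), Matrix.map_mul, map_neg, Complex.conj_I, neg_neg,
      Matrix.smul_mul]
  · simp [hU0, mul_eq_one_comm.1 hPP]

/-- particle-hole symmetry of the Hamiltonian implies particle-hole symmetry
of the time-evolution operator: `P U(k,t) P⁻¹ = (U(-k,t))*`. -/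
theorem evolution_particle_hole_symmetry {d n : ℕ} (hd : 1 ≤ d) (hn : 1 ≤ n)
    (H : (Fin d → ℝ) → ℝ → Matrix (Fin n) (Fin n) ℂ)
    (hHcont : Continuous fun p : (Fin d → ℝ) × ℝ => H p.1 p.2)
    (hHherm : ∀ k t, (H k t).IsHermitian)
    (P : Matrix (Fin n) (Fin n) ℂ) (hP : P ∈ Matrix.unitaryGroup (Fin n) ℂ)
    (hPH : ∀ k t, P * H k t * P⁻¹ = -((H (-k) t).map (starRingEnd ℂ)))
    (U : (Fin d → ℝ) → ℝ → Matrix (Fin n) (Fin n) ℂ)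
    (hU0 : ∀ k, U k 0 = 1)
    (hUde : ∀ k t, HasDerivAt (U k) ((-Complex.I) • (H k t * U k t)) t) :
    ∀ k t, P * U k t * P⁻¹ = (U (-k) t).map (starRingEnd ℂ) :=
  evolution_particle_hole_symmetry_general H hHherm P hP hPH U hU0 hUde
end

section
/- Time-reversal symmetry of the Hamiltonian implies the stated transformation of the evolution operator: let d, n ≥ 1, let H : (Fin d → ℝ) → ℝ → Matrix n n ℂ be continuous with each H(k,t) Hermitian, and let θ be an n×n unitary matrix such that θ·H(k,t)·θ⁻¹ = (H(-k,1-t))* for all k and t, where M* denotes the entrywise complex conjugate. Suppose U : (Fin d → ℝ) → ℝ → Matrix n n ℂ satisfies U(k,0) = 1 and, for every k and t, the derivative in t of U(k,·) at t equals -i·H(k,t)·U(k,t). Then every U(k,t) is unitary and θ·U(k,t)·θ⁻¹ = (U(-k,1-t))* · (U(-k,1))ᵀ for all k and t, where Mᵀ denotes the transpose. -/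
open Matrix

attribute [local instance] Matrix.normedAddCommGroup Matrix.normedSpace

/-!
With `G = -i H`, which is skew-adjoint, `star (U t) * V t` is constant for any two solutions of
`X' = G X`; with `V = U` this gives unitarity, and it also gives uniqueness of the solution with
initial value `1`. Time reversal turns `U(-k, ·)` into the solution
`s ↦ θ⁻¹ (U(-k, 1-s))* (U(-k, 1))ᵀ θ` of the equation for `G(k, ·)`, which starts at `1`
because `U(-k, 1)` is unitary; hence it is `U(k, ·)`.
-/

section NormedAlgebra

variable {𝔸 : Type*} [NormedRing 𝔸] [NormedAlgebra ℝ 𝔸] {G U V : ℝ → 𝔸}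

theorem star_mul_eq_of_hasDerivAt [StarRing 𝔸] [StarModule ℝ 𝔸] [ContinuousStar 𝔸]
    (hG : ∀ t, star (G t) = -G t)
    (hU : ∀ t, HasDerivAt U (G t * U t) t) (hV : ∀ t, HasDerivAt V (G t * V t) t) (t : ℝ) :
    star (U t) * V t = star (U 0) * V 0 := by
  have hderiv : ∀ s, HasDerivAt (fun r => star (U r) * V r) 0 s := fun s => by
    refine ((hU s).star.mul (hV s)).congr_deriv ?_
    rw [star_mul, hG, mul_neg, neg_mul, mul_assoc, neg_add_cancel]
  exact is_const_of_deriv_eq_zero (fun s => (hderiv s).differentiableAt)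
    (fun s => (hderiv s).deriv) t 0

theorem HasDerivAt.mul_mul_of_mul_eq_one {a b : 𝔸} (hab : a * b = 1) {t : ℝ}
    (hV : HasDerivAt V (b * G t * a * V t) t) :
    HasDerivAt (fun s => a * V s * b) (G t * (a * V t * b)) t := by
  refine ((hV.const_mul a).mul_const b).congr_deriv ?_
  simp only [← mul_assoc, hab, one_mul]

end NormedAlgebra

namespace Matrix

variable {ι : Type*} [Fintype ι]

theorem _root_.HasDerivAt.matrix_map_conj_s7 {m n : Type*} [Fintype m] [Fintype n]
    {A : ℝ → Matrix m n ℂ} {A' : Matrix m n ℂ} {t : ℝ} (h : HasDerivAt A A' t) :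
    HasDerivAt (fun s => (A s).map (starRingEnd ℂ)) (A'.map (starRingEnd ℂ)) t :=
  hasDerivAt_pi.2 fun i => hasDerivAt_pi.2 fun j =>
    (hasDerivAt_pi.1 (hasDerivAt_pi.1 h i) j).star

theorem hasDerivAt_map_conj_comp_const_sub {G W : ℝ → Matrix ι ι ℂ}
    (hW : ∀ t, HasDerivAt W (G t * W t) t) (c s : ℝ) :
    HasDerivAt (fun r => (W (c - r)).map (starRingEnd ℂ))
      (-(G (c - s)).map (starRingEnd ℂ) * (W (c - s)).map (starRingEnd ℂ)) s := by
  refine ((hW (c - s)).comp_const_sub c s).matrix_map_conj_s7.congr_deriv ?_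
  rw [Matrix.map_neg _ (_root_.map_neg _), Matrix.map_mul, neg_mul]

/- `HasDerivAt` only depends on the topology, which the ambient sup norm shares with the
operator norm `Matrix.linftyOpNormedRing`; below, the latter makes `Matrix ι ι ℂ` a normed
algebra so that the lemmas of the previous section apply. -/
variable [DecidableEq ι]

theorem star_mul_eq_of_hasDerivAt {G U V : ℝ → Matrix ι ι ℂ} (hG : ∀ t, star (G t) = -G t)
    (hU : ∀ t, HasDerivAt U (G t * U t) t) (hV : ∀ t, HasDerivAt V (G t * V t) t) (t : ℝ) :
    star (U t) * V t = star (U 0) * V 0 :=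
  @_root_.star_mul_eq_of_hasDerivAt _ Matrix.linftyOpNormedRing Matrix.linftyOpNormedAlgebra
    _ _ _ _ _ (inferInstanceAs (ContinuousStar (Matrix ι ι ℂ))) hG hU hV t

theorem mem_unitaryGroup_of_hasDerivAt {G U : ℝ → Matrix ι ι ℂ} (hG : ∀ t, star (G t) = -G t)
    (hU : ∀ t, HasDerivAt U (G t * U t) t) (hU0 : U 0 = 1) (t : ℝ) :
    U t ∈ unitaryGroup ι ℂ := by
  simpa [mem_unitaryGroup_iff', hU0] using star_mul_eq_of_hasDerivAt hG hU hU t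

theorem eq_of_hasDerivAt {G U V : ℝ → Matrix ι ι ℂ} (hG : ∀ t, star (G t) = -G t)
    (hU : ∀ t, HasDerivAt U (G t * U t) t) (hV : ∀ t, HasDerivAt V (G t * V t) t)
    (hU0 : U 0 = 1) (hV0 : V 0 = 1) (t : ℝ) : V t = U t := by
  have hUV : star (U t) * V t = 1 := by
    rw [star_mul_eq_of_hasDerivAt hG hU hV t, hU0, hV0, star_one, one_mul]
  calc V t = U t * star (U t) * V t := by
        rw [mem_unitaryGroup_iff.1 (mem_unitaryGroup_of_hasDerivAt hG hU hU0 t), one_mul]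
    _ = U t := by rw [mul_assoc, hUV, mul_one]

theorem hasDerivAt_inv_mul_map_conj_mul {G G' W : ℝ → Matrix ι ι ℂ} {θ : Matrix ι ι ℂ}
    (hθ : θ⁻¹ * θ = 1) {c : ℝ} (hGG' : ∀ s, θ * G s * θ⁻¹ = -(G' (c - s)).map (starRingEnd ℂ))
    (hW : ∀ t, HasDerivAt W (G' t * W t) t) (C : Matrix ι ι ℂ) (s : ℝ) :
    HasDerivAt (fun r => θ⁻¹ * ((W (c - r)).map (starRingEnd ℂ) * C) * θ)
      (G s * (θ⁻¹ * ((W (c - s)).map (starRingEnd ℂ) * C) * θ)) s := by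
  let _ := Matrix.linftyOpNormedRing (n := ι) (α := ℂ)
  let _ := Matrix.linftyOpNormedAlgebra (n := ι) (α := ℂ) (R := ℝ)
  refine HasDerivAt.mul_mul_of_mul_eq_one hθ ?_
  refine ((hasDerivAt_map_conj_comp_const_sub hW c s).mul_const C).congr_deriv ?_
  rw [hGG', mul_assoc]

theorem map_conj_mul_transpose_of_mem_unitaryGroup {A : Matrix ι ι ℂ} (hA : A ∈ unitaryGroup ι ℂ) :
    A.map (starRingEnd ℂ) * Aᵀ = 1 := by
  change A.map star * Aᵀ = 1
  rw [← conjTranspose_transpose, ← transpose_mul, ← star_eq_conjTranspose,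
    mem_unitaryGroup_iff.1 hA, transpose_one]

end Matrix

theorem evolution_time_reversal_symmetry_general {d n : ℕ}
    (H : (Fin d → ℝ) → ℝ → Matrix (Fin n) (Fin n) ℂ)
    (hHherm : ∀ k t, (H k t).IsHermitian)
    (θ : Matrix (Fin n) (Fin n) ℂ) (hθ : θ ∈ Matrix.unitaryGroup (Fin n) ℂ)
    (hθH : ∀ k t, θ * H k t * θ⁻¹ = (H (-k) (1 - t)).map (starRingEnd ℂ))
    (U : (Fin d → ℝ) → ℝ → Matrix (Fin n) (Fin n) ℂ)
    (hU0 : ∀ k, U k 0 = 1)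
    (hUde : ∀ k t, HasDerivAt (U k) ((-Complex.I) • (H k t * U k t)) t) :
    (∀ k t, U k t ∈ Matrix.unitaryGroup (Fin n) ℂ) ∧
    ∀ k t, θ * U k t * θ⁻¹ = (U (-k) (1 - t)).map (starRingEnd ℂ) * (U (-k) 1)ᵀ := by
  set G : (Fin d → ℝ) → ℝ → Matrix (Fin n) (Fin n) ℂ := fun k t => -Complex.I • H k t
  have hG : ∀ k t, star (G k t) = -G k t := fun k t => by
    simp [G, star_smul, (hHherm k t).star_eq]
  have hUG : ∀ k t, HasDerivAt (U k) (G k t * U k t) t := fun k t => by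
    simpa only [G, smul_mul_assoc] using hUde k t
  have hunit : ∀ k t, U k t ∈ unitaryGroup (Fin n) ℂ := fun k =>
    mem_unitaryGroup_of_hasDerivAt (hG k) (hUG k) (hU0 k)
  refine ⟨hunit, fun k t => ?_⟩
  have hdet : IsUnit θ.det := isUnit_det_of_left_inverse (mem_unitaryGroup_iff'.1 hθ)
  have hθG : ∀ s, θ * G k s * θ⁻¹ = -(G (-k) (1 - s)).map (starRingEnd ℂ) := fun s => by
    ext
    simp [G, hθH]
  set V : ℝ → Matrix (Fin n) (Fin n) ℂ :=
    fun s => θ⁻¹ * ((U (-k) (1 - s)).map (starRingEnd ℂ) * (U (-k) 1)ᵀ) * θ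
  have hV0 : V 0 = 1 := by
    simp only [V, sub_zero, map_conj_mul_transpose_of_mem_unitaryGroup (hunit (-k) 1), mul_one,
      nonsing_inv_mul θ hdet]
  have hVU : V t = U k t := eq_of_hasDerivAt (hG k) (hUG k)
    (hasDerivAt_inv_mul_map_conj_mul (nonsing_inv_mul θ hdet) hθG (hUG (-k)) _)
    (hU0 k) hV0 t
  rw [← hVU]
  simp only [V, ← mul_assoc, mul_nonsing_inv θ hdet, one_mul,
    mul_nonsing_inv_cancel_right (A := θ) _ hdet]

/-- time-reversal symmetry of the Hamiltonian implies that the time-evolution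
operator is unitary and satisfies `θ U(k,t) θ⁻¹ = (U(-k,1-t))* (U(-k,1))ᵀ`. -/
theorem evolution_time_reversal_symmetry {d n : ℕ} (hd : 1 ≤ d) (hn : 1 ≤ n)
    (H : (Fin d → ℝ) → ℝ → Matrix (Fin n) (Fin n) ℂ)
    (hHcont : Continuous fun p : (Fin d → ℝ) × ℝ => H p.1 p.2)
    (hHherm : ∀ k t, (H k t).IsHermitian)
    (θ : Matrix (Fin n) (Fin n) ℂ) (hθ : θ ∈ Matrix.unitaryGroup (Fin n) ℂ)
    (hθH : ∀ k t, θ * H k t * θ⁻¹ = (H (-k) (1 - t)).map (starRingEnd ℂ))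
    (U : (Fin d → ℝ) → ℝ → Matrix (Fin n) (Fin n) ℂ)
    (hU0 : ∀ k, U k 0 = 1)
    (hUde : ∀ k t, HasDerivAt (U k) ((-Complex.I) • (H k t * U k t)) t) :
    (∀ k t, U k t ∈ Matrix.unitaryGroup (Fin n) ℂ) ∧
    ∀ k t, θ * U k t * θ⁻¹ = (U (-k) (1 - t)).map (starRingEnd ℂ) * (U (-k) 1)ᵀ :=
  evolution_time_reversal_symmetry_general H hHherm θ hθ hθH U hU0 hUde
end

section
/- Chiral symmetry of the Hamiltonian implies the stated transformation of the evolution operator: let d, n ≥ 1, let H : (Fin d → ℝ) → ℝ → Matrix n n ℂ be continuous with each H(k,t) Hermitian, and let C be an n×n unitary matrix such that C·H(k,t)·C⁻¹ = -H(k,1-t) for all k and t. Suppose U : (Fin d → ℝ) → ℝ → Matrix n n ℂ satisfies U(k,0) = 1 and, for every k and t, the derivative in t of U(k,·) at t equals -i·H(k,t)·U(k,t). Then every U(k,t) is unitary and C·U(k,t)·C⁻¹ = U(k,1-t) · (U(k,1))ᴴ for all k and t, where Mᴴ denotes the conjugate transpose. -/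
/-!
Two solutions `X`, `Y` of `X' = -i K X` with `K` Hermitian have `Xᴴ Y` constant, because
`(Xᴴ Y)' = i Xᴴ K Y - i Xᴴ K Y = 0`. With `X = Y` this gives unitarity and, applied to a difference,
uniqueness of solutions. Both `t ↦ C U(t) C⁻¹` and `t ↦ U(1-t) U(1)ᴴ` solve the Schrödinger
equation for `t ↦ -H(1-t)` (the first by chiral symmetry) and both equal `1` at `t = 0`, so they agree.
-/

open Matrix

attribute [local instance] Matrix.normedAddCommGroup Matrix.normedSpace

section Calculus

variable {m 𝕜 : Type*} [Fintype m] [RCLike 𝕜]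

noncomputable def Matrix.mulCLM : Matrix m m 𝕜 →L[ℝ] Matrix m m 𝕜 →L[ℝ] Matrix m m 𝕜 :=
  LinearMap.toContinuousLinearMap
    (LinearMap.toContinuousLinearMap.toLinearMap ∘ₗ LinearMap.mul ℝ (Matrix m m 𝕜))

theorem HasDerivAt.matrix_mul_s8 {f g : ℝ → Matrix m m 𝕜} {f' g' : Matrix m m 𝕜} {t : ℝ}
    (hf : HasDerivAt f f' t) (hg : HasDerivAt g g' t) :
    HasDerivAt (fun t => f t * g t) (f' * g t + f t * g') t := by
  rw [add_comm]
  exact Matrix.mulCLM.hasDerivAt_of_bilinear (fun _ => hf) (fun _ => hg)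

end Calculus

variable {m : Type*} [Fintype m]

def SolvesSchrodinger (K X : ℝ → Matrix m m ℂ) : Prop :=
  ∀ t, HasDerivAt X (-Complex.I • (K t * X t)) t

namespace SolvesSchrodinger

variable {K X Y : ℝ → Matrix m m ℂ}

theorem sub (hX : SolvesSchrodinger K X) (hY : SolvesSchrodinger K Y) :
    SolvesSchrodinger K (X - Y) := fun t =>
  ((hX t).sub (hY t)).congr_deriv (by rw [Pi.sub_apply, Matrix.mul_sub, smul_sub])

theorem mul_const (hX : SolvesSchrodinger K X) (B : Matrix m m ℂ) :
    SolvesSchrodinger K (fun t => X t * B) := fun t =>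
  ((hX t).matrix_mul_s8 (hasDerivAt_const t B)).congr_deriv
    (by rw [Matrix.mul_zero, add_zero, Matrix.smul_mul, Matrix.mul_assoc])

theorem conj [DecidableEq m] (hX : SolvesSchrodinger K X) {C D : Matrix m m ℂ} (hDC : D * C = 1) :
    SolvesSchrodinger (fun t => C * K t * D) (fun t => C * X t * D) := fun t => by
  have hKX : C * (K t * X t) * D = C * K t * D * (C * X t * D) := by
    simp only [Matrix.mul_assoc]
    rw [← Matrix.mul_assoc D C, hDC, Matrix.one_mul]
  refine (((hasDerivAt_const t C).matrix_mul_s8 (hX t)).matrix_mul_s8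
    (hasDerivAt_const t D)).congr_deriv ?_
  rw [Matrix.zero_mul, zero_add, Matrix.mul_zero, add_zero, Matrix.mul_smul, Matrix.smul_mul, hKX]

theorem comp_one_sub (hX : SolvesSchrodinger K X) :
    SolvesSchrodinger (fun t => -K (1 - t)) (fun t => X (1 - t)) := fun t =>
  ((hX (1 - t)).comp_const_sub 1 t).congr_deriv (by rw [Matrix.neg_mul, smul_neg])

theorem conjTranspose_mul_eq (hK : ∀ t, (K t).IsHermitian) (hX : SolvesSchrodinger K X)
    (hY : SolvesSchrodinger K Y) (s t : ℝ) : (X t)ᴴ * Y t = (X s)ᴴ * Y s := by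
  have hderiv : ∀ t, HasDerivAt (fun t => (X t)ᴴ * Y t) 0 t := fun t => by
    have hzero : (-Complex.I • (K t * X t))ᴴ * Y t + (X t)ᴴ * (-Complex.I • (K t * Y t)) = 0 := by
      simp [conjTranspose_mul, (hK t).eq, Matrix.mul_assoc]
    exact ((hX t).star.matrix_mul_s8 (hY t)).congr_deriv hzero
  exact is_const_of_deriv_eq_zero (fun t => (hderiv t).differentiableAt)
    (fun t => (hderiv t).deriv) t s

open scoped ComplexOrder in
theorem eq_of_apply_eq (hK : ∀ t, (K t).IsHermitian) (hX : SolvesSchrodinger K X)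
    (hY : SolvesSchrodinger K Y) {s : ℝ} (hs : X s = Y s) : X = Y := by
  funext t
  have hXY := (hX.sub hY).conjTranspose_mul_eq hK (hX.sub hY) s t
  simp only [Pi.sub_apply, hs, sub_self, conjTranspose_zero, Matrix.zero_mul,
    conjTranspose_mul_self_eq_zero] at hXY
  exact sub_eq_zero.mp hXY

theorem mem_unitaryGroup [DecidableEq m] (hK : ∀ t, (K t).IsHermitian)
    (hX : SolvesSchrodinger K X) {s : ℝ} (hs : X s ∈ unitaryGroup m ℂ) (t : ℝ) :
    X t ∈ unitaryGroup m ℂ := by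
  rw [mem_unitaryGroup_iff', star_eq_conjTranspose, hX.conjTranspose_mul_eq hK hX s t,
    ← star_eq_conjTranspose, ← mem_unitaryGroup_iff']
  exact hs

end SolvesSchrodinger

theorem evolution_chiral_symmetry_general {d n : ℕ}
    (H : (Fin d → ℝ) → ℝ → Matrix (Fin n) (Fin n) ℂ)
    (hHherm : ∀ k t, (H k t).IsHermitian)
    (C : Matrix (Fin n) (Fin n) ℂ) (hC : C ∈ Matrix.unitaryGroup (Fin n) ℂ)
    (hCH : ∀ k t, C * H k t * C⁻¹ = -(H k (1 - t)))
    (U : (Fin d → ℝ) → ℝ → Matrix (Fin n) (Fin n) ℂ)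
    (hU0 : ∀ k, U k 0 = 1)
    (hUde : ∀ k t, HasDerivAt (U k) ((-Complex.I) • (H k t * U k t)) t) :
    (∀ k t, U k t ∈ Matrix.unitaryGroup (Fin n) ℂ) ∧
    ∀ k t, C * U k t * C⁻¹ = U k (1 - t) * (U k 1)ᴴ := by
  have hUunit k : ∀ t, U k t ∈ unitaryGroup (Fin n) ℂ :=
    SolvesSchrodinger.mem_unitaryGroup (hHherm k) (hUde k) (s := 0) (hU0 k ▸ one_mem _)
  refine ⟨hUunit, fun k t => ?_⟩
  have hCinv : C⁻¹ = star C := inv_eq_left_inv (mem_unitaryGroup_iff'.mp hC)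
  have hW : SolvesSchrodinger (fun t => -H k (1 - t)) (fun t => C * U k t * C⁻¹) := by
    rw [← funext (hCH k)]
    exact SolvesSchrodinger.conj (hUde k) (hCinv ▸ mem_unitaryGroup_iff'.mp hC)
  have hZ : SolvesSchrodinger (fun t => -H k (1 - t)) (fun t => U k (1 - t) * (U k 1)ᴴ) :=
    SolvesSchrodinger.comp_one_sub (hUde k) |>.mul_const _
  have hWZ0 : C * U k 0 * C⁻¹ = U k (1 - 0) * (U k 1)ᴴ := by
    rw [hU0, Matrix.mul_one, hCinv, mem_unitaryGroup_iff.mp hC, sub_zero,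
      ← star_eq_conjTranspose, mem_unitaryGroup_iff.mp (hUunit k 1)]
  exact congrFun (hW.eq_of_apply_eq (fun t => (hHherm k (1 - t)).neg) hZ hWZ0) t

/-- chiral symmetry of the Hamiltonian implies that the time-evolution
operator is unitary and satisfies `C U(k,t) C⁻¹ = U(k,1-t) (U(k,1))ᴴ`. -/
theorem evolution_chiral_symmetry {d n : ℕ} (hd : 1 ≤ d) (hn : 1 ≤ n)
    (H : (Fin d → ℝ) → ℝ → Matrix (Fin n) (Fin n) ℂ)
    (hHcont : Continuous fun p : (Fin d → ℝ) × ℝ => H p.1 p.2)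
    (hHherm : ∀ k t, (H k t).IsHermitian)
    (C : Matrix (Fin n) (Fin n) ℂ) (hC : C ∈ Matrix.unitaryGroup (Fin n) ℂ)
    (hCH : ∀ k t, C * H k t * C⁻¹ = -(H k (1 - t)))
    (U : (Fin d → ℝ) → ℝ → Matrix (Fin n) (Fin n) ℂ)
    (hU0 : ∀ k, U k 0 = 1)
    (hUde : ∀ k t, HasDerivAt (U k) ((-Complex.I) • (H k t * U k t)) t) :
    (∀ k t, U k t ∈ Matrix.unitaryGroup (Fin n) ℂ) ∧
    ∀ k t, C * U k t * C⁻¹ = U k (1 - t) * (U k 1)ᴴ :=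
  evolution_chiral_symmetry_general H hHherm C hC hCH U hU0 hUde
end

section
/- Particle-hole symmetry of the symmetrized unitary: let d, n ≥ 1, let H : (Fin d → ℝ) → ℝ → Matrix n n ℂ be continuous with each H(k,t) Hermitian, and let P be an n×n unitary matrix such that P·H(k,t)·P⁻¹ = -(H(-k,t))* for all k and t. Let U(k,t) be the time-evolution operator of H, and define the symmetrized unitary U_S(k,t) = U(k,(1+t)/2) · (U(k,(1-t)/2))ᴴ. Then P·U_S(k,t)·P⁻¹ = (U_S(-k,t))* for all k and t. -/
/-!
Conjugating `U(k, ·)` by `P`, and conjugating `U(-k, ·)` entrywise, both solve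
`X' = i · (H(-k, s))* · X` with `X(0) = 1`. The generator is skew-Hermitian, so for the difference
`Z` of two solutions `Zᴴ Z` is conserved, hence zero: `P U(k,s) P⁻¹ = (U(-k,s))*`. Conjugation by
the unitary `P` is multiplicative and commutes with `ᴴ`, so the identity passes to `U_S`.
-/

open Matrix

attribute [local instance] Matrix.normedAddCommGroup Matrix.normedSpace

theorem star_mul_self_eq_of_hasDerivAt_skewAdjoint {𝔸 : Type*} [NormedRing 𝔸]
    [NormedAlgebra ℝ 𝔸] [StarRing 𝔸] [StarModule ℝ 𝔸] [ContinuousStar 𝔸]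
    {G Z : ℝ → 𝔸} (hG : ∀ s, star (G s) = -G s) (hZ : ∀ s, HasDerivAt Z (G s * Z s) s)
    (t : ℝ) : star (Z t) * Z t = star (Z 0) * Z 0 := by
  have hconst : ∀ s, HasDerivAt (fun r => star (Z r) * Z r) 0 s := fun s => by
    convert (hZ s).star.fun_mul (hZ s) using 1
    rw [star_mul, hG, mul_neg, neg_mul, mul_assoc, neg_add_cancel]
  exact is_const_of_deriv_eq_zero (fun s => (hconst s).differentiableAt)
    (fun s => (hconst s).deriv) t 0

theorem conj_mul_conj_of_mul_eq_one {M : Type*} [Monoid M] {P Q : M} (h : Q * P = 1)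
    (A B : M) : P * A * Q * (P * B * Q) = P * (A * B) * Q := by
  simp only [mul_assoc, ← mul_assoc Q, h, one_mul]

section MatrixDerivatives

variable {ι : Type*} [Fintype ι]

theorem HasDerivAt.matrix_mul_mul {f : ℝ → Matrix ι ι ℂ} {f' : Matrix ι ι ℂ} {t : ℝ}
    (hf : HasDerivAt f f' t) (P Q : Matrix ι ι ℂ) :
    HasDerivAt (fun s => P * f s * Q) (P * f' * Q) t := by
  classical
  open scoped Matrix.Norms.L2Operator in
  exact (hf.const_mul P).mul_const Q

theorem HasDerivAt.matrix_map_conj_s9 {𝕜 : Type*} [RCLike 𝕜] {f : ℝ → Matrix ι ι 𝕜}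
    {f' : Matrix ι ι 𝕜} {t : ℝ} (hf : HasDerivAt f f' t) :
    HasDerivAt (fun s => (f s).map (starRingEnd 𝕜)) (f'.map (starRingEnd 𝕜)) t :=
  hasDerivAt_pi.2 fun i => hasDerivAt_pi.2 fun j => (hasDerivAt_pi.1 (hasDerivAt_pi.1 hf i) j).star

open ComplexOrder in
theorem Matrix.eq_of_hasDerivAt_skewHermitian {G X Y : ℝ → Matrix ι ι ℂ}
    (hG : ∀ s, (G s)ᴴ = -G s) (hX : ∀ s, HasDerivAt X (G s * X s) s)
    (hY : ∀ s, HasDerivAt Y (G s * Y s) s) (h0 : X 0 = Y 0) (t : ℝ) : X t = Y t := by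
  have hZ : ∀ s, HasDerivAt (X - Y) (G s * (X - Y) s) s := fun s => by
    rw [Pi.sub_apply, mul_sub]
    exact (hX s).sub (hY s)
  classical
  -- `HasDerivAt` only sees the topology, which the L2 operator norm shares with the entrywise one.
  open scoped Matrix.Norms.L2Operator in
  have hconserved := star_mul_self_eq_of_hasDerivAt_skewAdjoint hG hZ t
  rw [Pi.sub_apply, Pi.sub_apply, h0, sub_self, star_zero, zero_mul] at hconserved
  exact sub_eq_zero.1 (conjTranspose_mul_self_eq_zero.1 hconserved)

end MatrixDerivatives

theorem Matrix.mul_conjTranspose_mul_inv_of_mem_unitaryGroup {ι α : Type*} [Fintype ι]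
    [DecidableEq ι] [CommRing α] [StarRing α] {P : Matrix ι ι α} (hP : P ∈ unitaryGroup ι α)
    (A : Matrix ι ι α) : P * Aᴴ * P⁻¹ = (P * A * P⁻¹)ᴴ := by
  rw [inv_eq_left_inv hP.1, star_eq_conjTranspose]
  simp only [conjTranspose_mul, conjTranspose_conjTranspose, mul_assoc]

theorem mul_mul_inv_eq_map_conj_of_particleHole {K ι : Type*} [Neg K] [Fintype ι]
    [DecidableEq ι] (H : K → ℝ → Matrix ι ι ℂ) (hHherm : ∀ k t, (H k t).IsHermitian)
    (P : Matrix ι ι ℂ) (hP : IsUnit P.det)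
    (hPH : ∀ k t, P * H k t * P⁻¹ = -((H (-k) t).map (starRingEnd ℂ)))
    (U : K → ℝ → Matrix ι ι ℂ) (hU0 : ∀ k, U k 0 = 1)
    (hUde : ∀ k t, HasDerivAt (U k) ((-Complex.I) • (H k t * U k t)) t) (k : K) (t : ℝ) :
    P * U k t * P⁻¹ = (U (-k) t).map (starRingEnd ℂ) := by
  set G : ℝ → Matrix ι ι ℂ := fun s => Complex.I • (H (-k) s).map (starRingEnd ℂ)
  have hG : ∀ s, (G s)ᴴ = -G s := fun s => by
    have hB := (hHherm (-k) s).map (starRingEnd ℂ) fun _ => rfl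
    simp only [G, conjTranspose_smul, hB.eq, Complex.star_def, Complex.conj_I, neg_smul]
  refine eq_of_hasDerivAt_skewHermitian (X := fun s => P * U k s * P⁻¹)
    (Y := fun s => (U (-k) s).map (starRingEnd ℂ)) hG (fun s => ?_) (fun s => ?_) ?_ t
  · convert (hUde k s).matrix_mul_mul P P⁻¹ using 1
    calc G s * (P * U k s * P⁻¹) = -Complex.I • (P * H k s * P⁻¹ * (P * U k s * P⁻¹)) := by
          rw [hPH, neg_mul, smul_neg, ← neg_smul, neg_neg, smul_mul_assoc]
      _ = P * (-Complex.I • (H k s * U k s)) * P⁻¹ := by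
          rw [conj_mul_conj_of_mul_eq_one (nonsing_inv_mul P hP), mul_smul_comm, smul_mul_assoc]
  · convert (hUde (-k) s).matrix_map_conj_s9 using 1
    rw [Matrix.map_smul' _ _ _ (map_mul _), Matrix.map_mul, map_neg, Complex.conj_I, neg_neg]
    exact smul_mul_assoc _ _ _
  · simp only [hU0, mul_one, mul_nonsing_inv P hP, Matrix.map_one _ (map_zero _) (map_one _)]

theorem symmetrized_unitary_particle_hole_symmetry_general {d n : ℕ}
    (H : (Fin d → ℝ) → ℝ → Matrix (Fin n) (Fin n) ℂ)
    (hHherm : ∀ k t, (H k t).IsHermitian)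
    (P : Matrix (Fin n) (Fin n) ℂ) (hP : P ∈ Matrix.unitaryGroup (Fin n) ℂ)
    (hPH : ∀ k t, P * H k t * P⁻¹ = -((H (-k) t).map (starRingEnd ℂ)))
    (U : (Fin d → ℝ) → ℝ → Matrix (Fin n) (Fin n) ℂ)
    (hU0 : ∀ k, U k 0 = 1)
    (hUde : ∀ k t, HasDerivAt (U k) ((-Complex.I) • (H k t * U k t)) t)
    (US : (Fin d → ℝ) → ℝ → Matrix (Fin n) (Fin n) ℂ)
    (hUS : ∀ k t, US k t = U k ((1 + t) / 2) * (U k ((1 - t) / 2))ᴴ) :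
    ∀ k t, P * US k t * P⁻¹ = (US (-k) t).map (starRingEnd ℂ) := by
  intro k t
  have hdet : IsUnit P.det := isUnit_det_of_left_inverse hP.1
  have hU := mul_mul_inv_eq_map_conj_of_particleHole H hHherm P hdet hPH U hU0 hUde k
  rw [hUS, hUS, ← conj_mul_conj_of_mul_eq_one (nonsing_inv_mul P hdet),
    mul_conjTranspose_mul_inv_of_mem_unitaryGroup hP, hU, hU,
    ← conjTranspose_map (starRingEnd ℂ) fun _ => rfl, Matrix.map_mul]

/-- particle-hole symmetry of the symmetrized unitary
`U_S(k,t) = U(k,(1+t)/2) (U(k,(1-t)/2))ᴴ`: it satisfies `P U_S(k,t) P⁻¹ = (U_S(-k,t))*`. -/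
theorem symmetrized_unitary_particle_hole_symmetry {d n : ℕ} (hd : 1 ≤ d) (hn : 1 ≤ n)
    (H : (Fin d → ℝ) → ℝ → Matrix (Fin n) (Fin n) ℂ)
    (hHcont : Continuous fun p : (Fin d → ℝ) × ℝ => H p.1 p.2)
    (hHherm : ∀ k t, (H k t).IsHermitian)
    (P : Matrix (Fin n) (Fin n) ℂ) (hP : P ∈ Matrix.unitaryGroup (Fin n) ℂ)
    (hPH : ∀ k t, P * H k t * P⁻¹ = -((H (-k) t).map (starRingEnd ℂ)))
    (U : (Fin d → ℝ) → ℝ → Matrix (Fin n) (Fin n) ℂ)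
    (hU0 : ∀ k, U k 0 = 1)
    (hUde : ∀ k t, HasDerivAt (U k) ((-Complex.I) • (H k t * U k t)) t)
    (US : (Fin d → ℝ) → ℝ → Matrix (Fin n) (Fin n) ℂ)
    (hUS : ∀ k t, US k t = U k ((1 + t) / 2) * (U k ((1 - t) / 2))ᴴ) :
    ∀ k t, P * US k t * P⁻¹ = (US (-k) t).map (starRingEnd ℂ) :=
  symmetrized_unitary_particle_hole_symmetry_general H hHherm P hP hPH U hU0 hUde US hUS
end

section
/- Converse of the Hermitian-map construction (one-to-one correspondence): let d, n ≥ 1, let P be an n×n unitary matrix, and set P₁ = fromBlocks P 0 0 P and P₂ = fromBlocks P 0 0 (-P). Let M : (Fin d → ℝ) → Matrix (2n) (2n) ℂ be a family such that for every k: M(k) is Hermitian, M(k)² = 1, P₁·M(k)·P₁⁻¹ = (M(-k))*, and P₂·M(k)·P₂⁻¹ = -(M(-k))*. Then for each k there exists a unique n×n matrix U(k) such that M(k) = fromBlocks 0 (U(k)) ((U(k))ᴴ) 0; moreover each U(k) is unitary and P·U(k)·P⁻¹ = (U(-k))* for all k. -/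
/-! Conjugation by `fromBlocks P 0 0 P` and by `fromBlocks P 0 0 (-P)` acts identically on the
diagonal blocks and with opposite signs on the off-diagonal blocks. Comparing the two relations,
the diagonal blocks of `(M (-k))*` equal their own negatives, so they vanish. Hermiticity then
makes the lower-left block of `M k` the adjoint of its upper-right block `U k`, `M k * M k = 1`
says `U k * (U k)ᴴ = 1`, and the upper-right block of the first relation is
`P * U k * P⁻¹ = (U (-k))*`. -/

open Matrix

namespace Matrix

variable {m n R : Type*}

instance [AddCommGroup R] [IsAddTorsionFree R] : IsAddTorsionFree (Matrix m n R) :=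
  inferInstanceAs (IsAddTorsionFree (m → n → R))

theorem eq_fromBlocks_zero_of_isHermitian [AddMonoid R] [StarAddMonoid R]
    {M : Matrix (m ⊕ n) (m ⊕ n) R} (hM : M.IsHermitian)
    (h₁₁ : M.toBlocks₁₁ = 0) (h₂₂ : M.toBlocks₂₂ = 0) :
    M = fromBlocks 0 M.toBlocks₁₂ M.toBlocks₁₂ᴴ 0 := by
  rw [← fromBlocks_toBlocks M, isHermitian_fromBlocks_iff] at hM
  conv_lhs => rw [← fromBlocks_toBlocks M]
  rw [h₁₁, h₂₂, hM.2.1]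

variable [Fintype m] [Fintype n] [DecidableEq m] [DecidableEq n] [CommRing R]

theorem mem_unitaryGroup_of_fromBlocks_mul_self [StarRing R] {U : Matrix n n R}
    (h : fromBlocks 0 U Uᴴ 0 * fromBlocks 0 U Uᴴ 0 = 1) : U ∈ unitaryGroup n R := by
  rw [fromBlocks_multiply, ← fromBlocks_one, fromBlocks_inj] at h
  simpa [mem_unitaryGroup_iff, star_eq_conjTranspose] using h.1

theorem inv_neg (A : Matrix n n R) : (-A)⁻¹ = -A⁻¹ := by
  by_cases hA : IsUnit A
  · exact inv_eq_left_inv (by simp [nonsing_inv_mul _ ((isUnit_iff_isUnit_det A).mp hA)])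
  · simp_rw [nonsing_inv_eq_ringInverse, Ring.inverse_non_unit _ hA,
      Ring.inverse_non_unit _ (mt (IsUnit.neg_iff A).mp hA), neg_zero]

theorem fromBlocks_diag_mul_mul_inv (P : Matrix m m R) (Q : Matrix n n R)
    (hPQ : IsUnit P ↔ IsUnit Q) (M : Matrix (m ⊕ n) (m ⊕ n) R) :
    fromBlocks P 0 0 Q * M * (fromBlocks P 0 0 Q)⁻¹ =
      fromBlocks (P * M.toBlocks₁₁ * P⁻¹) (P * M.toBlocks₁₂ * Q⁻¹)
        (Q * M.toBlocks₂₁ * P⁻¹) (Q * M.toBlocks₂₂ * Q⁻¹) := by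
  rw [inv_fromBlocks_zero₂₁_of_isUnit_iff P 0 Q hPQ]
  conv_lhs => rw [← fromBlocks_toBlocks M]
  simp [fromBlocks_multiply, Matrix.mul_assoc]

theorem toBlocks_diag_eq_zero_of_conj_neg [IsAddTorsionFree R] {P : Matrix n n R}
    {M N : Matrix (n ⊕ n) (n ⊕ n) R}
    (hconj : fromBlocks P 0 0 P * M * (fromBlocks P 0 0 P)⁻¹ = N)
    (hconj_neg : fromBlocks P 0 0 (-P) * M * (fromBlocks P 0 0 (-P))⁻¹ = -N) :
    N.toBlocks₁₁ = 0 ∧ N.toBlocks₂₂ = 0 := by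
  rw [fromBlocks_diag_mul_mul_inv _ _ Iff.rfl] at hconj
  rw [fromBlocks_diag_mul_mul_inv _ _ (IsUnit.neg_iff P).symm, inv_neg, ← hconj, fromBlocks_neg,
    fromBlocks_inj] at hconj_neg
  subst hconj
  exact ⟨self_eq_neg.mp hconj_neg.1, self_eq_neg.mp (by simpa using hconj_neg.2.2.2)⟩

end Matrix

theorem hermitian_map_converse_general {d n : ℕ}
    (P : Matrix (Fin n) (Fin n) ℂ)
    (M : (Fin d → ℝ) → Matrix (Fin n ⊕ Fin n) (Fin n ⊕ Fin n) ℂ)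
    (hMherm : ∀ k, (M k).IsHermitian)
    (hMsq : ∀ k, M k * M k = 1)
    (hM1 : ∀ k, Matrix.fromBlocks P 0 0 P * M k * (Matrix.fromBlocks P 0 0 P)⁻¹ =
      (M (-k)).map (starRingEnd ℂ))
    (hM2 : ∀ k, Matrix.fromBlocks P 0 0 (-P) * M k * (Matrix.fromBlocks P 0 0 (-P))⁻¹ =
      -((M (-k)).map (starRingEnd ℂ))) :
    ∃ U : (Fin d → ℝ) → Matrix (Fin n) (Fin n) ℂ,
      (∀ k, M k = Matrix.fromBlocks 0 (U k) (U k)ᴴ 0) ∧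
      (∀ k, U k ∈ Matrix.unitaryGroup (Fin n) ℂ) ∧
      (∀ k, P * U k * P⁻¹ = (U (-k)).map (starRingEnd ℂ)) ∧
      ∀ V : (Fin d → ℝ) → Matrix (Fin n) (Fin n) ℂ,
        (∀ k, M k = Matrix.fromBlocks 0 (V k) (V k)ᴴ 0) → V = U := by
  have hdiag : ∀ k, (M k).toBlocks₁₁ = 0 ∧ (M k).toBlocks₂₂ = 0 := fun k => by
    have h := toBlocks_diag_eq_zero_of_conj_neg (hM1 (-k)) (hM2 (-k))
    rw [neg_neg] at h
    have hconj := map_injective (starRingEnd ℂ).injective (m := Fin n) (n := Fin n)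
    exact ⟨hconj (h.1.trans (Matrix.map_zero _ (map_zero _)).symm),
      hconj (h.2.trans (Matrix.map_zero _ (map_zero _)).symm)⟩
  have hform : ∀ k, M k = fromBlocks 0 (M k).toBlocks₁₂ (M k).toBlocks₁₂ᴴ 0 := fun k =>
    eq_fromBlocks_zero_of_isHermitian (hMherm k) (hdiag k).1 (hdiag k).2
  refine ⟨fun k => (M k).toBlocks₁₂, hform, fun k => ?_, fun k => ?_, fun V hV => ?_⟩
  · exact mem_unitaryGroup_of_fromBlocks_mul_self (hform k ▸ hMsq k)
  · have h := congrArg toBlocks₁₂ (hM1 k)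
    rwa [fromBlocks_diag_mul_mul_inv _ _ Iff.rfl, toBlocks_fromBlocks₁₂] at h
  · funext k
    exact (fromBlocks_inj.mp ((hV k).symm.trans (hform k))).2.1

/-- converse of the Hermitian-map construction. If a family `M k` of
Hermitian square-one matrices satisfies the two conjugation relations with
`P₁ = fromBlocks P 0 0 P` and `P₂ = fromBlocks P 0 0 (-P)`, then it comes from a (unique)
family of unitaries `U k` via `M k = fromBlocks 0 (U k) (U k)ᴴ 0`, and this family is
particle-hole symmetric: `P U(k) P⁻¹ = (U(-k))*`. -/
theorem hermitian_map_converse {d n : ℕ} (hd : 1 ≤ d) (hn : 1 ≤ n)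
    (P : Matrix (Fin n) (Fin n) ℂ) (hP : P ∈ Matrix.unitaryGroup (Fin n) ℂ)
    (M : (Fin d → ℝ) → Matrix (Fin n ⊕ Fin n) (Fin n ⊕ Fin n) ℂ)
    (hMherm : ∀ k, (M k).IsHermitian)
    (hMsq : ∀ k, M k * M k = 1)
    (hM1 : ∀ k, Matrix.fromBlocks P 0 0 P * M k * (Matrix.fromBlocks P 0 0 P)⁻¹ =
      (M (-k)).map (starRingEnd ℂ))
    (hM2 : ∀ k, Matrix.fromBlocks P 0 0 (-P) * M k * (Matrix.fromBlocks P 0 0 (-P))⁻¹ =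
      -((M (-k)).map (starRingEnd ℂ))) :
    ∃ U : (Fin d → ℝ) → Matrix (Fin n) (Fin n) ℂ,
      (∀ k, M k = Matrix.fromBlocks 0 (U k) (U k)ᴴ 0) ∧
      (∀ k, U k ∈ Matrix.unitaryGroup (Fin n) ℂ) ∧
      (∀ k, P * U k * P⁻¹ = (U (-k)).map (starRingEnd ℂ)) ∧
      ∀ V : (Fin d → ℝ) → Matrix (Fin n) (Fin n) ℂ,
        (∀ k, M k = Matrix.fromBlocks 0 (V k) (V k)ᴴ 0) → V = U :=
  hermitian_map_converse_general P M hMherm hMsq hM1 hM2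
end

section
/- Homotopy equivalence transfers between unitary loops and their Hermitian maps: let X be a topological space and n ≥ 1, and let U₀, U₁ be unitary loops on X with values in n×n complex unitary matrices. Define H_{U_i}(x,t) = fromBlocks 0 (U_i(x,t)) ((U_i(x,t))ᴴ) 0 and Σ = fromBlocks 1 0 0 (-1). Then U₀ and U₁ are homotopic through unitary loops if and only if H_{U₀} and H_{U₁} are homotopic through continuous maps M : X × [0,1] → Matrix (2n) (2n) ℂ such that every M(x,t) is Hermitian with M(x,t)² = 1 and Σ·M(x,t)·Σ⁻¹ = -M(x,t), and M(x,0) = M(x,1) = fromBlocks 0 1 1 0 for all x. -/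
open Matrix Set

/-- A continuous family of Hermitian `2n×2n` matrices squaring to the identity,
anticommuting with `Σ = fromBlocks 1 0 0 (-1)`, and equal to `fromBlocks 0 1 1 0` at the
initial and final times (the class of Hermitian maps of unitary loops). -/
def IsHermitianLoopMap {X : Type*} [TopologicalSpace X] {n : ℕ}
    (M : X × unitInterval → Matrix (Fin n ⊕ Fin n) (Fin n ⊕ Fin n) ℂ) : Prop :=
  Continuous M ∧
  (∀ p, (M p).IsHermitian ∧ M p * M p = 1 ∧
    Matrix.fromBlocks 1 0 0 (-1) * M p * (Matrix.fromBlocks 1 0 0 (-1))⁻¹ = -(M p)) ∧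
  ∀ x : X, M (x, 0) = Matrix.fromBlocks 0 1 1 0 ∧ M (x, 1) = Matrix.fromBlocks 0 1 1 0

/-- The Hermitian map associated to a unitary family: `H_U = fromBlocks 0 U Uᴴ 0`. -/
def hermitianMap {X : Type*} [TopologicalSpace X] {n : ℕ}
    (U : X × unitInterval → Matrix (Fin n) (Fin n) ℂ) :
    X × unitInterval → Matrix (Fin n ⊕ Fin n) (Fin n ⊕ Fin n) ℂ :=
  fun p => Matrix.fromBlocks 0 (U p) (U p)ᴴ 0

lemma sigma_inv {n : ℕ} :
    (Matrix.fromBlocks (1 : Matrix (Fin n) (Fin n) ℂ) 0 0 (-1 : Matrix (Fin n) (Fin n) ℂ))⁻¹ =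
      Matrix.fromBlocks (1 : Matrix (Fin n) (Fin n) ℂ) 0 0 (-1 : Matrix (Fin n) (Fin n) ℂ) := by
  apply Matrix.inv_eq_right_inv
  simp [Matrix.fromBlocks_multiply, ← Matrix.fromBlocks_one]

lemma key {n : ℕ} (M : Matrix (Fin n ⊕ Fin n) (Fin n ⊕ Fin n) ℂ)
    (h1 : M.IsHermitian) (h2 : M * M = 1)
    (h3 : Matrix.fromBlocks 1 0 0 (-1) * M * (Matrix.fromBlocks 1 0 0 (-1))⁻¹ = -M) :
    M = Matrix.fromBlocks 0 M.toBlocks₁₂ (M.toBlocks₁₂)ᴴ 0 ∧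
      M.toBlocks₁₂ ∈ Matrix.unitaryGroup (Fin n) ℂ := by
  set A := M.toBlocks₁₁
  set B := M.toBlocks₁₂
  set C := M.toBlocks₂₁
  set D := M.toBlocks₂₂
  have hM : M = Matrix.fromBlocks A B C D := (Matrix.fromBlocks_toBlocks M).symm
  rw [sigma_inv, hM] at h3
  rw [hM] at h1 h2
  rw [Matrix.fromBlocks_multiply, Matrix.fromBlocks_multiply, Matrix.fromBlocks_neg] at h3
  simp only [Matrix.one_mul, Matrix.mul_one, Matrix.zero_mul, Matrix.mul_zero,
    Matrix.neg_mul, Matrix.mul_neg, add_zero, zero_add, neg_neg] at h3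
  have hA : A = 0 := by
    have := congrArg Matrix.toBlocks₁₁ h3
    simp only [Matrix.toBlocks_fromBlocks₁₁] at this
    have h2A : (2 : ℂ) • A = 0 := by rw [two_smul]; nth_rewrite 2 [this]; simp
    exact (smul_eq_zero.mp h2A).resolve_left two_ne_zero
  have hD : D = 0 := by
    have := congrArg Matrix.toBlocks₂₂ h3
    simp only [Matrix.toBlocks_fromBlocks₂₂] at this
    have h2D : (2 : ℂ) • D = 0 := by rw [two_smul]; nth_rewrite 2 [this]; simp
    exact (smul_eq_zero.mp h2D).resolve_left two_ne_zero
  have hC : C = Bᴴ := by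
    have := congrArg Matrix.toBlocks₂₁ h1
    unfold Matrix.IsHermitian at h1
    rw [Matrix.fromBlocks_conjTranspose] at h1
    have := congrArg Matrix.toBlocks₂₁ h1
    simpa using this.symm
  rw [hA, hD, hC] at hM h2
  rw [Matrix.fromBlocks_multiply] at h2
  simp only [Matrix.zero_mul, Matrix.mul_zero, add_zero, zero_add] at h2
  rw [← Matrix.fromBlocks_one] at h2
  have h11 := congrArg Matrix.toBlocks₁₁ h2
  have h22 := congrArg Matrix.toBlocks₂₂ h2
  simp only [Matrix.toBlocks_fromBlocks₁₁, Matrix.toBlocks_fromBlocks₂₂] at h11 h22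
  refine ⟨hM, ?_⟩
  rw [Matrix.mem_unitaryGroup_iff]
  rw [Matrix.star_eq_conjTranspose]
  exact h11

lemma hermitianMap_isLoopMap {X : Type*} [TopologicalSpace X] {n : ℕ}
    {U : X × unitInterval → Matrix (Fin n) (Fin n) ℂ} (hU : IsUnitaryLoop U) :
    IsHermitianLoopMap (hermitianMap U) := by
  obtain ⟨⟨hc, hu, h0⟩, h1⟩ := hU
  refine ⟨((continuous_const.matrix_fromBlocks hc) hc.matrix_conjTranspose) continuous_const,
    fun p => ?_, fun x => ?_⟩
  · have hu1 : U p * (U p)ᴴ = 1 := by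
      have := (Matrix.mem_unitaryGroup_iff.mp (hu p))
      rwa [Matrix.star_eq_conjTranspose] at this
    have hu2 : (U p)ᴴ * U p = 1 := by
      have := (Matrix.mem_unitaryGroup_iff'.mp (hu p))
      rwa [Matrix.star_eq_conjTranspose] at this
    refine ⟨?_, ?_, ?_⟩
    · unfold Matrix.IsHermitian hermitianMap
      rw [Matrix.fromBlocks_conjTranspose]
      simp
    · unfold hermitianMap
      rw [Matrix.fromBlocks_multiply]
      simp [hu1, hu2, ← Matrix.fromBlocks_one]
    · unfold hermitianMap
      rw [sigma_inv, Matrix.fromBlocks_multiply, Matrix.fromBlocks_multiply]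
      simp [Matrix.fromBlocks_neg]
  · constructor <;> simp [hermitianMap, h0, h1]

/-- two unitary loops are homotopic through unitary loops iff their
Hermitian maps are homotopic through Hermitian loop maps. -/
theorem loops_homotopic_iff_hermitian_maps_homotopic
    {X : Type*} [TopologicalSpace X] {n : ℕ} (hn : 1 ≤ n)
    (U₀ U₁ : X × unitInterval → Matrix (Fin n) (Fin n) ℂ)
    (hU₀ : IsUnitaryLoop U₀) (hU₁ : IsUnitaryLoop U₁) :
    HomotopicThrough IsUnitaryLoop U₀ U₁ ↔
      HomotopicThrough IsHermitianLoopMap (hermitianMap U₀) (hermitianMap U₁) := by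
  constructor
  · rintro ⟨h, hc, hQ, h0, h1⟩
    refine ⟨fun q => Matrix.fromBlocks 0 (h q) (h q)ᴴ 0,
      ((continuous_const.matrix_fromBlocks hc) hc.matrix_conjTranspose) continuous_const,
      fun s => hermitianMap_isLoopMap (hQ s), fun y => by simp [hermitianMap, h0 y],
      fun y => by simp [hermitianMap, h1 y]⟩
  · rintro ⟨h, hc, hQ, h0, h1⟩
    have gcont : Continuous fun q => (h q).toBlocks₁₂ :=
      continuous_matrix fun i j => hc.matrix_elem (Sum.inl i) (Sum.inr j)
    refine ⟨fun q => (h q).toBlocks₁₂, gcont, fun s => ?_,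
      fun y => by show (h (0,y)).toBlocks₁₂ = _; rw [h0 y]; simp [hermitianMap],
      fun y => by show (h (1,y)).toBlocks₁₂ = _; rw [h1 y]; simp [hermitianMap]⟩
    obtain ⟨hcs, hprop, hends⟩ := hQ s
    refine ⟨⟨gcont.comp (continuous_const.prodMk continuous_id), fun p => ?_, fun x => ?_⟩, fun x => ?_⟩
    · exact (key _ (hprop p).1 (hprop p).2.1 (hprop p).2.2).2
    · show (h (s,(x,0))).toBlocks₁₂ = 1; have e := (hends x).1; dsimp only at e; rw [e]; simp
    · show (h (s,(x,1))).toBlocks₁₂ = 1; have e := (hends x).2; dsimp only at e; rw [e]; simp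
end

section
/- The time-reversal-symmetric composition of two time-reversal-symmetric Hamiltonians is time-reversal symmetric: let d, n ≥ 1, let θ be an n×n unitary matrix, and let H₁, H₂ : (Fin d → ℝ) → ℝ → Matrix n n ℂ satisfy θ·H_i(k,t)·θ⁻¹ = (H_i(-k,1-t))* for i = 1,2 and all k, t. Define H : (Fin d → ℝ) → [0,1] → Matrix n n ℂ by H(k,t) = H₂(k,2t) for 0 ≤ t ≤ 1/4, H(k,t) = H₁(k,2t-1/2) for 1/4 ≤ t ≤ 3/4, and H(k,t) = H₂(k,2t-1) for 3/4 ≤ t ≤ 1. Then θ·H(k,t)·θ⁻¹ = (H(-k,1-t))* for all k and all t ∈ [0,1]. -/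
open Matrix

/-- the time-reversal-symmetric composition of two time-reversal-symmetric
Hamiltonian families is time-reversal symmetric on `[0,1]`. -/
theorem trs_composition_is_trs {d n : ℕ} (hd : 1 ≤ d) (hn : 1 ≤ n)
    (θ : Matrix (Fin n) (Fin n) ℂ) (hθ : θ ∈ Matrix.unitaryGroup (Fin n) ℂ)
    (H₁ H₂ H : (Fin d → ℝ) → ℝ → Matrix (Fin n) (Fin n) ℂ)
    (hTRS₁ : ∀ k t, θ * H₁ k t * θ⁻¹ = (H₁ (-k) (1 - t)).map (starRingEnd ℂ))
    (hTRS₂ : ∀ k t, θ * H₂ k t * θ⁻¹ = (H₂ (-k) (1 - t)).map (starRingEnd ℂ))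
    (hHa : ∀ k, ∀ t ∈ Set.Icc (0 : ℝ) (1 / 4), H k t = H₂ k (2 * t))
    (hHb : ∀ k, ∀ t ∈ Set.Icc (1 / 4 : ℝ) (3 / 4), H k t = H₁ k (2 * t - 1 / 2))
    (hHc : ∀ k, ∀ t ∈ Set.Icc (3 / 4 : ℝ) 1, H k t = H₂ k (2 * t - 1)) :
    ∀ k, ∀ t ∈ Set.Icc (0 : ℝ) 1,
      θ * H k t * θ⁻¹ = (H (-k) (1 - t)).map (starRingEnd ℂ) := by
  intro k t ht
  obtain ⟨h0, h1⟩ := ht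
  rcases le_or_gt t (1/4) with h | h
  · rw [hHa k t ⟨h0, h⟩, hHc (-k) (1 - t) ⟨by linarith, by linarith⟩]
    have : 2 * (1 - t) - 1 = 1 - 2 * t := by ring
    rw [this, hTRS₂]
  · rcases le_or_gt t (3/4) with h' | h'
    · rw [hHb k t ⟨le_of_lt h, h'⟩, hHb (-k) (1 - t) ⟨by linarith, by linarith⟩]
      have : 2 * (1 - t) - 1/2 = 1 - (2 * t - 1/2) := by ring
      rw [this, hTRS₁]
    · rw [hHc k t ⟨le_of_lt h', h1⟩, hHa (-k) (1 - t) ⟨by linarith, by linarith⟩]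
      have : 2 * (1 - t) = 1 - (2 * t - 1) := by ring
      rw [this, hTRS₂]
end
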